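/- arXiv:1802.05967 — 8 statements merged into one kernel-verified Lean document; each statement's English description precedes it below -/
import Mathlib

section
/- Assume 0 < m < 1. Then the system (S) has at least one equilibrium point (x*, y*) with x* > 0, y* > 0, and moreover every such equilibrium satisfies m < x* < 1. Equivalently, the cubic polynomial R(X) = X³ + α₂X² + α₁X + α₀, with α₂ = a + k₁ − 1 + 2m, α₁ = m² + m(2k₁ − 1) + a·k₂ − k₁, α₀ = −k₁·m·(1−m), has at least one real root in the open interval (0, 1−m), and all its positive real roots lie in (0, 1−m). -/
open Filter Topology

/-- First right-hand side of the prey–predator system (S):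
`x' = x(1−x) − a·y·(x−m)₊/(k₁+(x−m)₊)`. -/
noncomputable def preyRHS (a k1 m x y : ℝ) : ℝ :=
  x * (1 - x) - a * y * max 0 (x - m) / (k1 + max 0 (x - m))

/-- Second right-hand side of the prey–predator system (S):
`y' = b·y·(1 − y/(k₂+(x−m)₊))`. -/
noncomputable def predRHS (b k2 m x y : ℝ) : ℝ :=
  b * y * (1 - y / (k2 + max 0 (x - m)))
/-- When `0 < m < 1`, the system (S) has at least one equilibrium point in the open
quadrant, every such equilibrium satisfies `m < x* < 1`, and equivalently the cubic
`R(X) = X³ + α₂X² + α₁X + α₀` has a root in `(0, 1−m)`, with all its positive roots in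
`(0, 1−m)`. -/
theorem existence_of_equilibrium_m_pos (a b k1 k2 m α₂ α₁ α₀ : ℝ)
    (ha : 0 < a) (hb : 0 < b) (hk1 : 0 < k1) (hk2 : 0 < k2)
    (hm0 : 0 < m) (hm1 : m < 1)
    (hα₂ : α₂ = a + k1 - 1 + 2 * m)
    (hα₁ : α₁ = m ^ 2 + m * (2 * k1 - 1) + a * k2 - k1)
    (hα₀ : α₀ = -(k1 * m * (1 - m))) :
    (∃ xs ys : ℝ, 0 < xs ∧ 0 < ys ∧ preyRHS a k1 m xs ys = 0 ∧ predRHS b k2 m xs ys = 0) ∧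
    (∀ xs ys : ℝ, 0 < xs → 0 < ys → preyRHS a k1 m xs ys = 0 → predRHS b k2 m xs ys = 0 →
      m < xs ∧ xs < 1) ∧
    (∃ X : ℝ, 0 < X ∧ X < 1 - m ∧ X ^ 3 + α₂ * X ^ 2 + α₁ * X + α₀ = 0) ∧
    (∀ X : ℝ, 0 < X → X ^ 3 + α₂ * X ^ 2 + α₁ * X + α₀ = 0 → X < 1 - m) := by
  subst hα₂ hα₁ hα₀
  set f : ℝ → ℝ := fun X => X ^ 3 + (a + k1 - 1 + 2 * m) * X ^ 2 +
    (m ^ 2 + m * (2 * k1 - 1) + a * k2 - k1) * X + -(k1 * m * (1 - m)) with hf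
  have key : ∀ X : ℝ, f X = a * (k2 + X) * X - (X + m) * (1 - m - X) * (k1 + X) := by
    intro X; simp only [hf]; ring
  have hcont : ContinuousOn f (Set.Icc 0 (1 - m)) := by fun_prop
  have h0 : f 0 < 0 := by
    rw [key]
    nlinarith [mul_pos (mul_pos hm0 (by linarith : (0:ℝ) < 1 - m)) hk1]
  have h1 : 0 < f (1 - m) := by
    rw [key]
    nlinarith [mul_pos (mul_pos ha (by linarith : (0:ℝ) < k2 + (1 - m)))
      (by linarith : (0:ℝ) < 1 - m)]
  have hsub := intermediate_value_Ioo (by linarith : (0:ℝ) ≤ 1 - m) hcont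
  obtain ⟨X, hXmem, hfX⟩ := hsub ⟨h0, h1⟩
  obtain ⟨hX0, hX1⟩ := hXmem
  have hroots : ∀ Y : ℝ, 0 < Y → f Y = 0 → Y < 1 - m := by
    intro Y hY hfY
    by_contra h
    push_neg at h
    rw [key] at hfY
    nlinarith [mul_pos (mul_pos ha (by linarith : (0:ℝ) < k2 + Y)) hY,
      mul_nonneg (mul_nonneg (by linarith : (0:ℝ) ≤ Y + m)
        (by linarith : (0:ℝ) ≤ Y - (1 - m))) (by linarith : (0:ℝ) ≤ k1 + Y)]
  refine ⟨?_, ?_, ⟨X, hX0, hX1, hfX⟩, hroots⟩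
  · refine ⟨X + m, k2 + X, by linarith, by linarith, ?_, ?_⟩
    · have hmax : max 0 (X + m - m) = X := by
        rw [show X + m - m = X by ring, max_eq_right hX0.le]
      have hden : k1 + X ≠ 0 := by positivity
      rw [preyRHS, hmax, sub_eq_zero, eq_div_iff hden]
      linear_combination key X - hfX
    · have hmax : max 0 (X + m - m) = X := by
        rw [show X + m - m = X by ring, max_eq_right hX0.le]
      have hden : k2 + X ≠ 0 := by positivity
      rw [predRHS, hmax, div_self hden]
      ring
  · intro xs ys hxs hys hprey hpred
    have hxm : m < xs := by
      by_contra h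
      push_neg at h
      have hmax : max 0 (xs - m) = 0 := max_eq_left (by linarith)
      rw [preyRHS, hmax] at hprey
      have hz : xs * (1 - xs) = 0 := by simpa using hprey
      rcases mul_eq_zero.1 hz with h1 | h2
      · linarith
      · have : xs = 1 := by linarith
        linarith
    have hmax : max 0 (xs - m) = xs - m := max_eq_right (by linarith)
    refine ⟨hxm, ?_⟩
    rw [predRHS, hmax] at hpred
    have hden2 : k2 + (xs - m) > 0 := by linarith
    have hys_eq : ys = k2 + (xs - m) := by
      rcases mul_eq_zero.1 hpred with h1 | h2
      · rcases mul_eq_zero.1 h1 with h3 | h4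
        · linarith
        · linarith
      · have h5 : ys / (k2 + (xs - m)) = 1 := by linarith
        field_simp at h5
        linarith
    rw [preyRHS, hmax, sub_eq_zero, eq_div_iff (ne_of_gt (by linarith : (0:ℝ) < k1 + (xs - m)))] at hprey
    by_contra h
    push_neg at h
    nlinarith [mul_pos (mul_pos ha hys) (by linarith : (0:ℝ) < xs - m),
      mul_nonneg (mul_nonneg hxs.le (by linarith : (0:ℝ) ≤ xs - 1))
        (by linarith : (0:ℝ) ≤ k1 + (xs - m))]
end

section
/- Assume 0 < m < 1, and suppose α₂ < 0, α₁·α₂ < α₀, α₂² − 3α₁ > 0, and the discriminant Δ = 18·α₂·α₁·α₀ − 4·α₂³·α₀ + α₂²·α₁² − 4·α₁³ − 27·α₀² of the cubic R(X) = X³ + α₂X² + α₁X + α₀ is positive. Then the system (S) has exactly 3 distinct equilibrium points (x*, y*) with x* > 0 and y* > 0. -/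
open Filter Topology

open Set in

theorem cubic_roots_ncard (α₂ α₁ α₀ : ℝ) (h1 : α₂ < 0) (hα₁ : 0 < α₁) (hα₀ : α₀ < 0)
    (h3 : 0 < α₂ ^ 2 - 3 * α₁)
    (h4 : 0 < 18 * α₂ * α₁ * α₀ - 4 * α₂ ^ 3 * α₀ + α₂ ^ 2 * α₁ ^ 2 - 4 * α₁ ^ 3 - 27 * α₀ ^ 2) :
    {X : ℝ | 0 < X ∧ X ^ 3 + α₂ * X ^ 2 + α₁ * X + α₀ = 0}.ncard = 3 := by
  obtain ⟨f, hfdef⟩ : ∃ f : ℝ → ℝ, ∀ X, f X = X ^ 3 + α₂ * X ^ 2 + α₁ * X + α₀ :=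
    ⟨_, fun _ => rfl⟩
  have hcont : Continuous f := by
    have : f = fun X => X ^ 3 + α₂ * X ^ 2 + α₁ * X + α₀ := funext hfdef
    rw [this]; fun_prop
  -- every root is positive
  have hpos : ∀ X : ℝ, f X = 0 → 0 < X := by
    intro X hX
    rw [hfdef] at hX
    by_contra hc
    push_neg at hc
    have h1' : X ^ 3 ≤ 0 := by nlinarith [sq_nonneg X]
    have h2' : α₂ * X ^ 2 ≤ 0 := mul_nonpos_of_nonpos_of_nonneg h1.le (sq_nonneg X)
    have h3' : α₁ * X ≤ 0 := mul_nonpos_of_nonneg_of_nonpos hα₁.le hc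
    nlinarith
  have hSeq : {X : ℝ | 0 < X ∧ X ^ 3 + α₂ * X ^ 2 + α₁ * X + α₀ = 0} = {X : ℝ | f X = 0} := by
    ext X
    simp only [mem_setOf_eq, hfdef]
    exact ⟨fun h => h.2, fun h => ⟨by have := hpos X (by rw [hfdef]; exact h); exact this, h⟩⟩
  rw [hSeq]
  -- upper bound via polynomial
  set P : Polynomial ℝ := Polynomial.X ^ 3 + Polynomial.C α₂ * Polynomial.X ^ 2 +
      Polynomial.C α₁ * Polynomial.X + Polynomial.C α₀ with hPdef
  have hPdeg : P.natDegree = 3 := by rw [hPdef]; compute_degree!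
  have hPne : P ≠ 0 := fun h => by simp [h] at hPdeg
  have heval : ∀ z : ℝ, Polynomial.eval z P = f z := by
    intro z; rw [hfdef]; simp [hPdef]
  have hsub : {X : ℝ | f X = 0} ⊆ ↑P.roots.toFinset := by
    intro z hz
    simp only [Finset.coe_sort_coe, Multiset.mem_toFinset, Finset.mem_coe,
      Polynomial.mem_roots', Polynomial.IsRoot, heval]
    exact ⟨hPne, hz⟩
  have hfin : {X : ℝ | f X = 0}.Finite := P.roots.toFinset.finite_toSet.subset hsub
  have hcard_le : {X : ℝ | f X = 0}.ncard ≤ 3 := by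
    calc {X : ℝ | f X = 0}.ncard ≤ (↑P.roots.toFinset : Set ℝ).ncard :=
          Set.ncard_le_ncard hsub P.roots.toFinset.finite_toSet
      _ = P.roots.toFinset.card := Set.ncard_coe_finset _
      _ ≤ Multiset.card P.roots := P.roots.toFinset_card_le
      _ ≤ 3 := hPdeg ▸ P.card_roots'
  -- critical points
  obtain ⟨s, hsdef⟩ : ∃ s : ℝ, s = Real.sqrt (α₂ ^ 2 - 3 * α₁) := ⟨_, rfl⟩
  have hs2 : s ^ 2 = α₂ ^ 2 - 3 * α₁ := by rw [hsdef]; exact Real.sq_sqrt h3.le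
  have hs_pos : 0 < s := by rw [hsdef]; exact Real.sqrt_pos.2 h3
  have hs_lt : s < -α₂ := by nlinarith [hs2, hs_pos]
  obtain ⟨p, hpdef⟩ : ∃ p : ℝ, p = (-α₂ - s) / 3 := ⟨_, rfl⟩
  obtain ⟨q, hqdef⟩ : ∃ q : ℝ, q = (-α₂ + s) / 3 := ⟨_, rfl⟩
  have hp_pos : 0 < p := by rw [hpdef]; linarith
  have hpq : p < q := by rw [hpdef, hqdef]; linarith
  have key : 27 * (f p * f q) =
      -(18 * α₂ * α₁ * α₀ - 4 * α₂ ^ 3 * α₀ + α₂ ^ 2 * α₁ ^ 2 - 4 * α₁ ^ 3 - 27 * α₀ ^ 2) := by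
    rw [hfdef, hfdef, hpdef, hqdef]
    linear_combination (-1/27 * s ^ 4 - 5/9 * α₁ * s ^ 2 - 4/3 * α₁ ^ 2 + 5/27 * α₂ ^ 2 * s ^ 2
      + 8/9 * α₂ ^ 2 * α₁ - 4/27 * α₂ ^ 4) * hs2
  have key2 : f p - f q = 4 * s ^ 3 / 27 := by
    rw [hfdef, hfdef, hpdef, hqdef]
    linear_combination (-2/9 * s) * hs2
  have hprod : f p * f q < 0 := by nlinarith
  have hfp_gt : f q < f p := by nlinarith [pow_pos hs_pos 3]
  have hfq_neg : f q < 0 := by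
    by_contra h
    push_neg at h
    exact absurd hprod (not_lt.2 (mul_nonneg (le_of_lt (lt_of_le_of_lt h hfp_gt)) h))
  have hfp_pos : 0 < f p := by
    rcases lt_or_ge 0 (f p) with h | h
    · exact h
    · exfalso
      have := mul_nonneg (neg_nonneg.2 h) (neg_nonneg.2 hfq_neg.le)
      nlinarith
  -- large point
  obtain ⟨M, hMdef⟩ : ∃ M : ℝ, M = 1 - α₂ + α₁ - α₀ := ⟨_, rfl⟩
  have hM1 : 1 < M := by rw [hMdef]; linarith
  have hqM : q < M := by rw [hqdef, hMdef]; linarith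
  have hfM : 0 < f M := by
    have hMpos : (0:ℝ) < M := by linarith
    have e1 : M ^ 2 * 1 ≤ M ^ 2 * (M + α₂) := by
      apply mul_le_mul_of_nonneg_left _ (sq_nonneg M)
      rw [hMdef]; linarith
    have e2 : M * 1 ≤ M * M := mul_le_mul_of_nonneg_left hM1.le hMpos.le
    have e3 : 0 < α₁ * M := mul_pos hα₁ hMpos
    have e4 : -α₀ < M := by rw [hMdef]; linarith
    rw [hfdef]
    nlinarith [e1, e2, e3, e4]
  have hf0 : f 0 < 0 := by rw [hfdef]; simpa using hα₀
  -- IVT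
  have ivt1 : ∃ x ∈ Ioo (0:ℝ) p, f x = 0 := by
    obtain ⟨x, hx, hfx⟩ := intermediate_value_Ioo hp_pos.le hcont.continuousOn ⟨hf0, hfp_pos⟩
    exact ⟨x, hx, hfx⟩
  have ivt2 : ∃ x ∈ Ioo p q, f x = 0 := by
    obtain ⟨x, hx, hfx⟩ := intermediate_value_Ioo' hpq.le hcont.continuousOn ⟨hfq_neg, hfp_pos⟩
    exact ⟨x, hx, hfx⟩
  have ivt3 : ∃ x ∈ Ioo q M, f x = 0 := by
    obtain ⟨x, hx, hfx⟩ := intermediate_value_Ioo hqM.le hcont.continuousOn ⟨hfq_neg, hfM⟩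
    exact ⟨x, hx, hfx⟩
  obtain ⟨x1, hx1, hfx1⟩ := ivt1
  obtain ⟨x2, hx2, hfx2⟩ := ivt2
  obtain ⟨x3, hx3, hfx3⟩ := ivt3
  have h12 : x1 ≠ x2 := ne_of_lt (lt_trans hx1.2 hx2.1)
  have h13 : x1 ≠ x3 := ne_of_lt (lt_trans hx1.2 (lt_trans hx2.1 (lt_trans hx2.2 hx3.1)))
  have h23 : x2 ≠ x3 := ne_of_lt (lt_trans hx2.2 hx3.1)
  have htriple : ({x1, x2, x3} : Set ℝ) ⊆ {X : ℝ | f X = 0} := by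
    intro z hz
    rcases hz with rfl | rfl | rfl <;> assumption
  have hge : 3 ≤ {X : ℝ | f X = 0}.ncard := by
    have h3card : ({x1, x2, x3} : Set ℝ).ncard = 3 :=
      Set.ncard_eq_three.mpr ⟨x1, x2, x3, h12, h13, h23, rfl⟩
    calc 3 = ({x1, x2, x3} : Set ℝ).ncard := h3card.symm
      _ ≤ {X : ℝ | f X = 0}.ncard := Set.ncard_le_ncard htriple hfin
  omega

/-- When `0 < m < 1` and `α₂ < 0`, `α₁α₂ < α₀`, `α₂² − 3α₁ > 0`, and the discriminant of
the cubic `R` is positive, the system (S) has exactly 3 distinct equilibrium points in the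
open quadrant. -/
theorem three_equilibria (a b k1 k2 m α₂ α₁ α₀ : ℝ)
    (ha : 0 < a) (hb : 0 < b) (hk1 : 0 < k1) (hk2 : 0 < k2)
    (hm0 : 0 < m) (hm1 : m < 1)
    (hα₂ : α₂ = a + k1 - 1 + 2 * m)
    (hα₁ : α₁ = m ^ 2 + m * (2 * k1 - 1) + a * k2 - k1)
    (hα₀ : α₀ = -(k1 * m * (1 - m)))
    (h1 : α₂ < 0) (h2 : α₁ * α₂ < α₀) (h3 : α₂ ^ 2 - 3 * α₁ > 0)
    (h4 : 18 * α₂ * α₁ * α₀ - 4 * α₂ ^ 3 * α₀ + α₂ ^ 2 * α₁ ^ 2 - 4 * α₁ ^ 3 - 27 * α₀ ^ 2 > 0) :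
    {p : ℝ × ℝ | 0 < p.1 ∧ 0 < p.2 ∧
      preyRHS a k1 m p.1 p.2 = 0 ∧ predRHS b k2 m p.1 p.2 = 0}.ncard = 3 := by
  have hα₀neg : α₀ < 0 := by
    rw [hα₀]
    have : 0 < k1 * m * (1 - m) := by
      apply mul_pos (mul_pos hk1 hm0); linarith
    linarith
  have hα₁pos : 0 < α₁ := by
    by_contra hc
    push_neg at hc
    have h' : 0 ≤ -α₁ * -α₂ := mul_nonneg (neg_nonneg.2 hc) (neg_nonneg.2 h1.le)
    nlinarith
  -- the set equality
  have hset : {p : ℝ × ℝ | 0 < p.1 ∧ 0 < p.2 ∧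
      preyRHS a k1 m p.1 p.2 = 0 ∧ predRHS b k2 m p.1 p.2 = 0} =
      (fun X : ℝ => (m + X, k2 + X)) ''
        {X : ℝ | 0 < X ∧ X ^ 3 + α₂ * X ^ 2 + α₁ * X + α₀ = 0} := by
    ext ⟨x, y⟩
    simp only [Set.mem_setOf_eq, Set.mem_image, Prod.mk.injEq]
    constructor
    · rintro ⟨hx, hy, hprey, hpred⟩
      unfold preyRHS at hprey
      unfold predRHS at hpred
      -- from pred equation: y = k2 + max 0 (x - m)
      have hfac : 1 - y / (k2 + max 0 (x - m)) = 0 := by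
        rcases mul_eq_zero.1 hpred with h | h
        · rcases mul_eq_zero.1 h with h' | h'
          · exact absurd h' hb.ne'
          · exact absurd h' hy.ne'
        · exact h
      have hden : k2 + max 0 (x - m) ≠ 0 := by
        intro h0
        rw [h0, div_zero] at hfac
        norm_num at hfac
      have hyd : y = k2 + max 0 (x - m) := by
        field_simp at hfac
        linarith
      by_cases hxm : x ≤ m
      · exfalso
        have hmax : max 0 (x - m) = 0 := max_eq_left (by linarith)
        rw [hmax] at hprey
        have hx1 : x * (1 - x) = 0 := by
          have : a * y * 0 / (k1 + 0) = 0 := by simp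
          linarith [hprey, this]
        rcases mul_eq_zero.1 hx1 with h | h
        · exact hx.ne' h
        · linarith
      · push_neg at hxm
        have hmax : max 0 (x - m) = x - m := max_eq_right (by linarith)
        rw [hmax] at hprey hyd
        have hk1x : k1 + (x - m) ≠ 0 :=
          ne_of_gt (by linarith : (0:ℝ) < k1 + (x - m))
        have heq : x * (1 - x) * (k1 + (x - m)) = a * y * (x - m) := by
          have h' := sub_eq_zero.1 hprey
          rwa [eq_div_iff hk1x] at h'
        refine ⟨x - m, ⟨by linarith, ?_⟩, by ring, by linarith [hyd]⟩
        rw [hyd] at heq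
        linear_combination -heq + (x - m) ^ 2 * hα₂ + (x - m) * hα₁ + hα₀
    · rintro ⟨X, ⟨hX, hroot⟩, hxe, hye⟩
      have hx : x = m + X := hxe.symm
      have hy : y = k2 + X := hye.symm
      subst hx hy
      have hmax : max 0 (m + X - m) = X := by
        rw [show m + X - m = X by ring, max_eq_right hX.le]
      refine ⟨by linarith, by linarith, ?_, ?_⟩
      · unfold preyRHS
        rw [hmax]
        have hk1X : k1 + X ≠ 0 := ne_of_gt (by linarith : (0:ℝ) < k1 + X)
        rw [sub_eq_zero, eq_div_iff hk1X]
        linear_combination -hroot + X ^ 2 * hα₂ + X * hα₁ + hα₀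
      · unfold predRHS
        rw [hmax]
        have hne : (k2 + X : ℝ) ≠ 0 := ne_of_gt (by linarith : (0:ℝ) < k2 + X)
        rw [div_self hne]
        ring
  rw [hset]
  have hinj : Function.Injective (fun X : ℝ => (m + X, k2 + X)) := by
    intro u v huv
    simpa using congrArg (fun p : ℝ × ℝ => p.1 - m) huv
  rw [Set.ncard_image_of_injective _ hinj]
  exact cubic_roots_ncard α₂ α₁ α₀ h1 hα₁pos hα₀neg h3 h4
end

section
/- Assume 0 < m < 1, and suppose that at least one of the following holds: α₂ ≥ 0, or α₁·α₂ ≥ α₀, or α₂² − 3α₁ ≤ 0, or the discriminant Δ = 18·α₂·α₁·α₀ − 4·α₂³·α₀ + α₂²·α₁² − 4·α₁³ − 27·α₀² of the cubic R(X) = X³ + α₂X² + α₁X + α₀ is negative. Then the system (S) has exactly 1 equilibrium point (x*, y*) with x* > 0 and y* > 0. -/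
open Filter Topology

/-- Auxiliary: under any of the four conditions, the cubic has at most one positive root. -/
theorem cubic_uniq_aux (k1 m α₂ α₁ α₀ : ℝ) (hk1 : 0 < k1) (hm0 : 0 < m) (hm1 : m < 1)
    (hα₀ : α₀ = -(k1 * m * (1 - m)))
    (hcond : α₂ ≥ 0 ∨ α₁ * α₂ ≥ α₀ ∨ α₂ ^ 2 - 3 * α₁ ≤ 0 ∨
      18 * α₂ * α₁ * α₀ - 4 * α₂ ^ 3 * α₀ + α₂ ^ 2 * α₁ ^ 2 - 4 * α₁ ^ 3 - 27 * α₀ ^ 2 < 0)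
    (r s : ℝ) (hr : 0 < r) (hs : 0 < s)
    (hfr : r^3 + α₂*r^2 + α₁*r + α₀ = 0) (hfs : s^3 + α₂*s^2 + α₁*s + α₀ = 0) :
    r = s := by
  by_contra hne
  obtain ⟨t, ht⟩ : ∃ t, α₂ = -(r + s + t) := ⟨-α₂ - r - s, by ring⟩
  subst ht
  have hQ : r^2 + r*s + s^2 - (r+s+t)*(r+s) + α₁ = 0 := by
    rcases mul_eq_zero.mp (show (r-s)*(r^2 + r*s + s^2 - (r+s+t)*(r+s) + α₁) = 0 by
      linear_combination hfr - hfs) with h | h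
    · exact absurd (by linarith : r = s) hne
    · exact h
  have hE1 : α₁ = r*s + r*t + s*t := by linear_combination hQ
  have hE0 : α₀ = -(r*s*t) := by linear_combination hfr - r*hE1
  have htpos : 0 < t := by
    have h1 : r*s*t = k1*m*(1-m) := by linear_combination hE0 - hα₀
    nlinarith [mul_pos hr hs, mul_pos (mul_pos hk1 hm0) (show (0:ℝ) < 1 - m by linarith)]
  rcases hcond with h | h | h | h
  · linarith
  · rw [hE1, hE0] at h
    nlinarith [mul_pos (add_pos hr hs) (mul_pos (add_pos hs htpos) (add_pos htpos hr))]
  · rw [hE1] at h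
    have hrs : (0:ℝ) < (r - s)^2 := by
      have : r - s ≠ 0 := sub_ne_zero.mpr hne
      positivity
    nlinarith [sq_nonneg (s - t), sq_nonneg (t - r)]
  · rw [hE1, hE0] at h
    nlinarith [sq_nonneg ((r-s)*((s-t)*(t-r)))]

/-- Auxiliary: a monic cubic with negative constant term has a positive root. -/
theorem cubic_exist_aux (α₂ α₁ α₀ : ℝ) (hα₀neg : α₀ < 0) :
    ∃ X : ℝ, 0 < X ∧ X^3 + α₂*X^2 + α₁*X + α₀ = 0 := by
  have hcont : Continuous fun X : ℝ => X^3 + α₂*X^2 + α₁*X + α₀ := by continuity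
  set B := |α₂| + |α₁| + |α₀| + 1 with hB
  have hB1 : 1 ≤ B := by
    have := abs_nonneg α₂; have := abs_nonneg α₁; have := abs_nonneg α₀; linarith
  have hsum : |α₂| + |α₁| + |α₀| = B - 1 := by rw [hB]; ring
  have hfB : 0 < B^3 + α₂*B^2 + α₁*B + α₀ := by
    have h1 : 0 ≤ (α₂ + |α₂|) * B^2 := mul_nonneg (by linarith [neg_abs_le α₂]) (sq_nonneg B)
    have h2 : 0 ≤ (α₁ + |α₁|) * B := mul_nonneg (by linarith [neg_abs_le α₁]) (by linarith)
    have h3 : 0 ≤ |α₁| * (B^2 - B) := mul_nonneg (abs_nonneg _) (by nlinarith)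
    have h4 : 0 ≤ |α₀| * (B^2 - 1) := mul_nonneg (abs_nonneg _) (by nlinarith)
    have h5 : (|α₂| + |α₁| + |α₀|) * B^2 = (B - 1) * B^2 := by rw [hsum]
    have hB2 : 1 ≤ B^2 := by nlinarith
    have h0 : α₀ + |α₀| ≥ 0 := by linarith [neg_abs_le α₀]
    nlinarith [h1, h2, h3, h4, h5, hB2, h0]
  have h0B : (0:ℝ) ≤ B := by linarith
  obtain ⟨X, hXmem, hfX⟩ := intermediate_value_Icc h0B hcont.continuousOn
    (⟨by norm_num; linarith, le_of_lt hfB⟩ :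
      (0:ℝ) ∈ Set.Icc ((0:ℝ)^3 + α₂*0^2 + α₁*0 + α₀) (B^3 + α₂*B^2 + α₁*B + α₀))
  refine ⟨X, ?_, hfX⟩
  rcases eq_or_lt_of_le hXmem.1 with h | h
  · exfalso; rw [← h] at hfX; norm_num at hfX; linarith
  · exact h

/-- When `0 < m < 1` and at least one of `α₂ ≥ 0`, `α₁α₂ ≥ α₀`, `α₂² − 3α₁ ≤ 0`, or a
negative discriminant of the cubic `R` holds, the system (S) has exactly 1 equilibrium
point in the open quadrant. -/
theorem one_equilibrium (a b k1 k2 m α₂ α₁ α₀ : ℝ)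
    (ha : 0 < a) (hb : 0 < b) (hk1 : 0 < k1) (hk2 : 0 < k2)
    (hm0 : 0 < m) (hm1 : m < 1)
    (hα₂ : α₂ = a + k1 - 1 + 2 * m)
    (hα₁ : α₁ = m ^ 2 + m * (2 * k1 - 1) + a * k2 - k1)
    (hα₀ : α₀ = -(k1 * m * (1 - m)))
    (hcond : α₂ ≥ 0 ∨ α₁ * α₂ ≥ α₀ ∨ α₂ ^ 2 - 3 * α₁ ≤ 0 ∨
      18 * α₂ * α₁ * α₀ - 4 * α₂ ^ 3 * α₀ + α₂ ^ 2 * α₁ ^ 2 - 4 * α₁ ^ 3 - 27 * α₀ ^ 2 < 0) :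
    {p : ℝ × ℝ | 0 < p.1 ∧ 0 < p.2 ∧
      preyRHS a k1 m p.1 p.2 = 0 ∧ predRHS b k2 m p.1 p.2 = 0}.ncard = 1 := by
  have hα₀neg : α₀ < 0 := by
    rw [hα₀]
    have : 0 < k1 * m * (1 - m) := mul_pos (mul_pos hk1 hm0) (by linarith)
    linarith
  have huniq := cubic_uniq_aux k1 m α₂ α₁ α₀ hk1 hm0 hm1 hα₀ hcond
  obtain ⟨X₀, hX₀pos, hfX₀⟩ := cubic_exist_aux α₂ α₁ α₀ hα₀neg
  have hset : {p : ℝ × ℝ | 0 < p.1 ∧ 0 < p.2 ∧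
      preyRHS a k1 m p.1 p.2 = 0 ∧ predRHS b k2 m p.1 p.2 = 0} = {(m + X₀, k2 + X₀)} := by
    ext ⟨x, y⟩
    simp only [Set.mem_setOf_eq, Set.mem_singleton_iff, Prod.mk.injEq]
    constructor
    · rintro ⟨hx, hy, hprey, hpred⟩
      unfold preyRHS at hprey
      unfold predRHS at hpred
      have hMnn : 0 ≤ max 0 (x - m) := le_max_left 0 _
      have hden2 : 0 < k2 + max 0 (x - m) := by linarith
      have hy' : y = k2 + max 0 (x - m) := by
        rcases mul_eq_zero.mp hpred with h | h
        · rcases mul_eq_zero.mp h with h | h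
          · exact absurd h (ne_of_gt hb)
          · exact absurd h (ne_of_gt hy)
        · field_simp at h
          linarith
      rcases le_or_gt x m with hxm | hxm
      · exfalso
        rw [max_eq_left (by linarith : x - m ≤ 0)] at hprey
        simp only [mul_zero, zero_div, sub_zero] at hprey
        rcases mul_eq_zero.mp hprey with h | h
        · linarith
        · linarith
      · rw [max_eq_right (by linarith : (0:ℝ) ≤ x - m)] at hprey hy'
        have hden1 : 0 < k1 + (x - m) := by linarith
        rw [hy'] at hprey
        have hp : x*(1-x)*(k1+(x-m)) - a*(k2+(x-m))*(x-m) = 0 := by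
          field_simp at hprey
          linear_combination hprey
        have hroot : (x-m)^3 + α₂*(x-m)^2 + α₁*(x-m) + α₀ = 0 := by
          linear_combination -hp + (x-m)^2*hα₂ + (x-m)*hα₁ + hα₀
        have hxX : x - m = X₀ := huniq (x-m) X₀ (by linarith) hX₀pos hroot hfX₀
        exact ⟨by linarith, by rw [hy', hxX]⟩
    · rintro ⟨hx1, hy1⟩
      subst hx1; subst hy1
      have hM : max 0 (m + X₀ - m) = X₀ := by
        have h : m + X₀ - m = X₀ := by ring
        rw [h, max_eq_right hX₀pos.le]
      refine ⟨by linarith, by linarith, ?_, ?_⟩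
      · unfold preyRHS
        rw [hM]
        have hden1 : k1 + X₀ ≠ 0 := ne_of_gt (by linarith)
        rw [sub_eq_zero, eq_comm, div_eq_iff hden1]
        linear_combination hfX₀ - X₀^2*hα₂ - X₀*hα₁ - hα₀
      · unfold predRHS
        rw [hM, div_self (ne_of_gt (by linarith : (0:ℝ) < k2 + X₀))]
        ring
  rw [hset]
  exact Set.ncard_singleton _
end

section
/- Assume m = 0 and suppose 4·a·k₂ < (1 − k₁ − a)² + 4·k₁, a·k₂ > k₁, and 1 − k₁ − a > 0. Then the system (S) has exactly 2 distinct equilibrium points (x*, y*) with x* > 0 and y* > 0. -/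
open Filter Topology

/-- When `m = 0`, `4·a·k₂ < (1 − k₁ − a)² + 4·k₁`, `a·k₂ > k₁` and `1 − k₁ − a > 0`, the
system (S) has exactly 2 distinct equilibrium points in the open quadrant. -/
theorem two_equilibria_m_zero (a b k1 k2 m : ℝ)
    (ha : 0 < a) (hb : 0 < b) (hk1 : 0 < k1) (hk2 : 0 < k2)
    (hm : m = 0)
    (h1 : 4 * a * k2 < (1 - k1 - a) ^ 2 + 4 * k1)
    (h2 : a * k2 > k1) (h3 : 1 - k1 - a > 0) :
    {p : ℝ × ℝ | 0 < p.1 ∧ 0 < p.2 ∧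
      preyRHS a k1 m p.1 p.2 = 0 ∧ predRHS b k2 m p.1 p.2 = 0}.ncard = 2 := by
  subst hm
  set s : ℝ := 1 - k1 - a with hs
  set c : ℝ := a * k2 - k1 with hc
  have hD : 0 < s ^ 2 - 4 * c := by nlinarith
  set r : ℝ := Real.sqrt (s ^ 2 - 4 * c) with hrdef
  have hr2 : r ^ 2 = s ^ 2 - 4 * c := Real.sq_sqrt hD.le
  have hrpos : 0 < r := Real.sqrt_pos.mpr hD
  have hrlt : r < s := by nlinarith
  set x1 : ℝ := (s - r) / 2 with hx1def
  set x2 : ℝ := (s + r) / 2 with hx2def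
  have hx1 : 0 < x1 := by simp only [hx1def]; linarith
  have hx2 : 0 < x2 := by simp only [hx2def]; linarith
  have hroot1 : x1 ^ 2 - s * x1 + c = 0 := by
    simp only [hx1def]; linear_combination (1/4 : ℝ) * hr2
  have hroot2 : x2 ^ 2 - s * x2 + c = 0 := by
    simp only [hx2def]; linear_combination (1/4 : ℝ) * hr2
  have key : ∀ x : ℝ, 0 < x →
      (preyRHS a k1 0 x (k2 + x) = 0 ↔ x ^ 2 - s * x + c = 0) := by
    intro x hx
    have hmax : max 0 (x - 0) = x := by
      rw [sub_zero, max_eq_right hx.le]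
    have hk1x : k1 + x ≠ 0 := by positivity
    unfold preyRHS
    rw [hmax]
    rw [sub_eq_zero, eq_div_iff hk1x]
    constructor
    · intro h
      have h' : x * ((1 - x) * (k1 + x) - a * (k2 + x)) = 0 := by linear_combination h
      rcases mul_eq_zero.mp h' with h0 | h0
      · exact absurd h0 hx.ne'
      · simp only [hs, hc]; linear_combination -h0
    · intro h
      simp only [hs, hc] at h
      linear_combination -x * h
  have hset : {p : ℝ × ℝ | 0 < p.1 ∧ 0 < p.2 ∧
      preyRHS a k1 0 p.1 p.2 = 0 ∧ predRHS b k2 0 p.1 p.2 = 0}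
      = {(x1, k2 + x1), (x2, k2 + x2)} := by
    ext ⟨x, y⟩
    simp only [Set.mem_setOf_eq, Set.mem_insert_iff, Set.mem_singleton_iff, Prod.mk.injEq]
    constructor
    · rintro ⟨hx, hy, hp, hq⟩
      have hmax : max 0 (x - 0) = x := by rw [sub_zero, max_eq_right hx.le]
      have hk2x : k2 + x ≠ 0 := by positivity
      have hyx : y = k2 + x := by
        unfold predRHS at hq
        rw [hmax] at hq
        rcases mul_eq_zero.mp hq with h0 | h0
        · rcases mul_eq_zero.mp h0 with h00 | h00
          · exact absurd h00 hb.ne'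
          · exact absurd h00 hy.ne'
        · have := sub_eq_zero.mp h0
          field_simp at this
          linarith [this]
      subst hyx
      have hquad := (key x hx).mp hp
      have hfac : (x - x1) * (x - x2) = 0 := by
        have hsum : x1 + x2 = s := by simp only [hx1def, hx2def]; ring
        have hprod : x1 * x2 = c := by
          simp only [hx1def, hx2def]; linear_combination (-1/4 : ℝ) * hr2
        linear_combination hquad - x * hsum + hprod
      rcases mul_eq_zero.mp hfac with h0 | h0
      · left; constructor <;> [skip; rw [sub_eq_zero.mp h0]]
        exact sub_eq_zero.mp h0
      · right; constructor <;> [skip; rw [sub_eq_zero.mp h0]]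
        exact sub_eq_zero.mp h0
    · rintro (⟨hx, hy⟩ | ⟨hx, hy⟩) <;> subst hx <;> subst hy
      · refine ⟨hx1, by positivity, (key x1 hx1).mpr hroot1, ?_⟩
        unfold predRHS
        rw [sub_zero, max_eq_right hx1.le]
        have : k2 + x1 ≠ 0 := by positivity
        field_simp
        simp
      · refine ⟨hx2, by positivity, (key x2 hx2).mpr hroot2, ?_⟩
        unfold predRHS
        rw [sub_zero, max_eq_right hx2.le]
        have : k2 + x2 ≠ 0 := by positivity
        field_simp
        simp
  rw [hset]
  rw [Set.ncard_pair]
  intro hcontra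
  have : x1 = x2 := (Prod.mk.injEq _ _ _ _).mp hcontra |>.1
  simp only [hx1def, hx2def] at this
  linarith
end

section
/- Assume m = 0 and suppose that either ( 4·a·k₂ < (1 − k₁ − a)² + 4·k₁ and ( a·k₂ < k₁, or ( a·k₂ = k₁ and 1 − k₁ − a > 0 ) ) ), or ( 4·a·k₂ = (1 − k₁ − a)² + 4·k₁ and 1 − k₁ − a > 0 ). Then the system (S) has exactly 1 equilibrium point (x*, y*) with x* > 0 and y* > 0. -/
open Filter Topology

/-- When `m = 0` and either (`4·a·k₂ < (1 − k₁ − a)² + 4·k₁` and (`a·k₂ < k₁` or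
(`a·k₂ = k₁` and `1 − k₁ − a > 0`))), or (`4·a·k₂ = (1 − k₁ − a)² + 4·k₁` and
`1 − k₁ − a > 0`), the system (S) has exactly 1 equilibrium point in the open quadrant. -/
theorem one_equilibrium_m_zero (a b k1 k2 m : ℝ)
    (ha : 0 < a) (hb : 0 < b) (hk1 : 0 < k1) (hk2 : 0 < k2)
    (hm : m = 0)
    (hcond : (4 * a * k2 < (1 - k1 - a) ^ 2 + 4 * k1 ∧
        (a * k2 < k1 ∨ (a * k2 = k1 ∧ 1 - k1 - a > 0))) ∨
      (4 * a * k2 = (1 - k1 - a) ^ 2 + 4 * k1 ∧ 1 - k1 - a > 0)) :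
    {p : ℝ × ℝ | 0 < p.1 ∧ 0 < p.2 ∧
      preyRHS a k1 m p.1 p.2 = 0 ∧ predRHS b k2 m p.1 p.2 = 0}.ncard = 1 := by
  subst hm
  set B : ℝ := 1 - k1 - a with hB
  set D : ℝ := B ^ 2 + 4 * k1 - 4 * a * k2 with hD
  have hD0 : 0 ≤ D := by
    rcases hcond with ⟨h1, _⟩ | ⟨h1, _⟩ <;> nlinarith
  have hsDnn : 0 ≤ Real.sqrt D := Real.sqrt_nonneg D
  have hsD : Real.sqrt D ^ 2 = D := Real.sq_sqrt hD0
  -- key dichotomy used to exclude the minus root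
  have hkey : B ≤ Real.sqrt D ∨ Real.sqrt D = 0 := by
    rcases hcond with ⟨h1, h2 | ⟨h2, h3⟩⟩ | ⟨h1, h2⟩
    · left
      have hBD : B ^ 2 ≤ D := by nlinarith
      nlinarith [hsD, hsDnn, sq_nonneg (B - Real.sqrt D), sq_nonneg (B + Real.sqrt D)]
    · left
      have hBD : B ^ 2 ≤ D := by nlinarith
      nlinarith [hsD, hsDnn, sq_nonneg (B - Real.sqrt D), sq_nonneg (B + Real.sqrt D)]
    · right
      have hDz : D = 0 := by rw [hD]; linarith
      rw [hDz, Real.sqrt_zero]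
  set x : ℝ := (B + Real.sqrt D) / 2 with hx
  have hxpos : 0 < x := by
    rcases hcond with ⟨h1, h2 | ⟨h2, h3⟩⟩ | ⟨h1, h2⟩
    · nlinarith [hsD, hsDnn, sq_nonneg (Real.sqrt D + B)]
    · nlinarith [hsD, hsDnn]
    · nlinarith [hsDnn]
  have hq : x ^ 2 + (a + k1 - 1) * x + (a * k2 - k1) = 0 := by
    have h2 : 2 * x - B = Real.sqrt D := by rw [hx]; ring
    have h3 : (2 * x - B) ^ 2 = D := by rw [h2]; exact hsD
    linear_combination (h3 + hD) / 4 + x * hB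
  have hk1x : (0:ℝ) < k1 + x := by linarith
  have hk2x : (0:ℝ) < k2 + x := by linarith
  rw [Set.ncard_eq_one]
  refine ⟨(x, k2 + x), ?_⟩
  ext ⟨px, py⟩
  simp only [Set.mem_setOf_eq, Set.mem_singleton_iff, Prod.mk.injEq]
  constructor
  · rintro ⟨hpx, hpy, hprey, hpred⟩
    have hmaxp : max 0 (px - 0) = px := by
      rw [sub_zero]; exact max_eq_right hpx.le
    have hk2p : (0:ℝ) < k2 + px := by linarith
    have hk1p : (0:ℝ) < k1 + px := by linarith
    -- from predRHS = 0 : py = k2 + px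
    have hy : py = k2 + px := by
      unfold predRHS at hpred
      rw [hmaxp] at hpred
      rcases mul_eq_zero.mp hpred with h | h
      · rcases mul_eq_zero.mp h with h' | h'
        · exact absurd h' (ne_of_gt hb)
        · exact absurd h' (ne_of_gt hpy)
      · have h1 : py / (k2 + px) = 1 := by linarith
        rw [div_eq_one_iff_eq (ne_of_gt hk2p)] at h1
        exact h1
    -- from preyRHS = 0 : quadratic in px
    have hqp : px ^ 2 + (a + k1 - 1) * px + (a * k2 - k1) = 0 := by
      unfold preyRHS at hprey
      rw [hmaxp, hy] at hprey
      rw [sub_eq_zero, eq_div_iff (ne_of_gt hk1p)] at hprey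
      have hmul : px * (px ^ 2 + (a + k1 - 1) * px + (a * k2 - k1)) = 0 := by
        linear_combination -hprey
      rcases mul_eq_zero.mp hmul with h | h
      · exact absurd h (ne_of_gt hpx)
      · exact h
    -- (2 px - B)^2 = D, factor it
    have hfac : (2 * px - B - Real.sqrt D) * (2 * px - B + Real.sqrt D) = 0 := by
      have h4 : (2 * px - B) ^ 2 = D := by
        linear_combination 4 * hqp - hD - 4 * px * hB
      linear_combination h4 - hsD
    have hpxeq : px = x := by
      rcases mul_eq_zero.mp hfac with h | h
      · rw [hx]; linarith
      · rcases hkey with hle | hz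
        · exfalso; linarith
        · rw [hz] at h; rw [hx, hz]; linarith
    exact ⟨hpxeq, by rw [hy, hpxeq]⟩
  · rintro ⟨h1, h2⟩
    subst h1; subst h2
    refine ⟨hxpos, by linarith, ?_, ?_⟩
    · unfold preyRHS
      rw [sub_zero, max_eq_right hxpos.le, sub_eq_zero, eq_div_iff (ne_of_gt hk1x)]
      linear_combination -x * hq
    · unfold predRHS
      rw [sub_zero, max_eq_right hxpos.le, div_self (ne_of_gt hk2x)]
      ring
end

section
/- Assume m = 0 and suppose that either 4·a·k₂ > (1 − k₁ − a)² + 4·k₁, or ( a·k₂ ≥ k₁ and 1 − k₁ − a ≤ 0 ). Then the system (S) has no equilibrium point (x*, y*) with x* > 0 and y* > 0. -/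
open Filter Topology

/-- When `m = 0` and either `4·a·k₂ > (1 − k₁ − a)² + 4·k₁`, or (`a·k₂ ≥ k₁` and
`1 − k₁ − a ≤ 0`), the system (S) has no equilibrium point in the open quadrant. -/
theorem no_equilibrium_m_zero (a b k1 k2 m : ℝ)
    (ha : 0 < a) (hb : 0 < b) (hk1 : 0 < k1) (hk2 : 0 < k2)
    (hm : m = 0)
    (hcond : 4 * a * k2 > (1 - k1 - a) ^ 2 + 4 * k1 ∨ (a * k2 ≥ k1 ∧ 1 - k1 - a ≤ 0)) :
    ∀ xs ys : ℝ, 0 < xs → 0 < ys →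
      ¬(preyRHS a k1 m xs ys = 0 ∧ predRHS b k2 m xs ys = 0) := by
  intro xs ys hxs hys ⟨h1, h2⟩
  have hmax : max 0 (xs - m) = xs := by
    rw [hm, sub_zero]; exact max_eq_right hxs.le
  have hk1x : (0:ℝ) < k1 + xs := by linarith
  have hk2x : (0:ℝ) < k2 + xs := by linarith
  rw [preyRHS, hmax] at h1
  rw [predRHS, hmax] at h2
  have hy : ys = k2 + xs := by
    have h3 : 1 - ys / (k2 + xs) = 0 := by
      rcases mul_eq_zero.1 h2 with h | h
      · rcases mul_eq_zero.1 h with h | h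
        · exact absurd h hb.ne'
        · exact absurd h hys.ne'
      · exact h
    field_simp at h3
    linarith
  have hE : xs ^ 2 + (a + k1 - 1) * xs + (a * k2 - k1) = 0 := by
    have h4 : (xs * (1 - xs) - a * ys * xs / (k1 + xs)) * (k1 + xs) = 0 := by
      rw [h1]; ring
    rw [hy] at h4
    field_simp at h4
    have hxs' : xs ≠ 0 := hxs.ne'
    nlinarith [h4, sq_nonneg xs]
  rcases hcond with h | ⟨h5, h6⟩
  · nlinarith [sq_nonneg (2 * xs + (a + k1 - 1))]
  · nlinarith [sq_nonneg xs, mul_pos hxs hxs]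
end

section
/- Assume 0 < m < 1 and suppose that every equilibrium point of the system (S) in the open quadrant is hyperbolic. Then the number n of such equilibrium points is 1 or 3; if n = 1 then the unique equilibrium satisfies det J(x*, y*) > 0 (it is a node or a focus); if n = 3 then exactly one of the three equilibria satisfies det J(x*, y*) < 0 (a saddle) and the other two satisfy det J(x*, y*) > 0 (nodes or foci). -/
open Filter Topology

/-- Determinant of the Jacobian matrix
`J(x*, y*) = [[1 − 2x* − a·y*·k₁/(k₁ + x* − m)², −a·(x* − m)/(k₁ + x* − m)], [b, −b]]`
of the right-hand side of (S) at an equilibrium point. -/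
noncomputable def detJ (a b k1 m xs ys : ℝ) : ℝ :=
  (1 - 2 * xs - a * ys * k1 / (k1 + xs - m) ^ 2) * (-b) -
    (-(a * (xs - m) / (k1 + xs - m))) * b

/-- Trace of the Jacobian matrix of the right-hand side of (S) at an equilibrium point. -/
noncomputable def traceJ (a b k1 m xs ys : ℝ) : ℝ :=
  (1 - 2 * xs - a * ys * k1 / (k1 + xs - m) ^ 2) + (-b)


section PPhelp
open Filter Topology Set Polynomial

/-- If `f` has derivative `d` at `x0`, vanishes at `x0`, and is nonpositive just
to the right of `x0`, then `d ≤ 0`. -/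
lemma PP.deriv_nonpos_of_right {f : ℝ → ℝ} {d x0 c : ℝ} (hd : HasDerivAt f d x0)
    (h0 : f x0 = 0) (hc : x0 < c) (h : ∀ x ∈ Set.Ioo x0 c, f x ≤ 0) : d ≤ 0 := by
  have ht : Tendsto (slope f x0) (𝓝[>] x0) (𝓝 d) :=
    (hasDerivAt_iff_tendsto_slope.1 hd).mono_left
      (nhdsWithin_mono _ (fun y hy => ne_of_gt hy))
  refine le_of_tendsto ht ?_
  filter_upwards [Ioo_mem_nhdsGT_of_mem (show x0 ∈ Ico x0 c from ⟨le_refl _, hc⟩)] with x hx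
  have hx0 : 0 < x - x0 := by linarith [hx.1]
  have : f x ≤ 0 := h x hx
  rw [slope_def_field]
  simp only [div_eq_mul_inv]
  rw [h0]
  have : (f x - 0) ≤ 0 := by linarith
  exact mul_nonpos_of_nonpos_of_nonneg this (by positivity)

lemma PP.deriv_nonneg_of_right {f : ℝ → ℝ} {d x0 c : ℝ} (hd : HasDerivAt f d x0)
    (h0 : f x0 = 0) (hc : x0 < c) (h : ∀ x ∈ Set.Ioo x0 c, 0 ≤ f x) : 0 ≤ d := by
  have := PP.deriv_nonpos_of_right (f := fun x => -f x) (hd.neg) (by simp [h0]) hc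
    (fun x hx => by simpa using h x hx)
  linarith

lemma PP.deriv_nonpos_of_left {f : ℝ → ℝ} {d x0 c : ℝ} (hd : HasDerivAt f d x0)
    (h0 : f x0 = 0) (hc : c < x0) (h : ∀ x ∈ Set.Ioo c x0, 0 ≤ f x) : d ≤ 0 := by
  have ht : Tendsto (slope f x0) (𝓝[<] x0) (𝓝 d) :=
    (hasDerivAt_iff_tendsto_slope.1 hd).mono_left
      (nhdsWithin_mono _ (fun y hy => ne_of_lt hy))
  refine le_of_tendsto ht ?_
  filter_upwards [Ioo_mem_nhdsLT_of_mem (show x0 ∈ Ioc c x0 from ⟨hc, le_refl _⟩)] with x hx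
  have hx0 : x - x0 < 0 := by linarith [hx.2]
  have hfx : 0 ≤ f x := h x hx
  rw [slope_def_field, h0]
  have : (f x - 0) / (x - x0) ≤ 0 := div_nonpos_of_nonneg_of_nonpos (by linarith) (by linarith)
  exact this

/-- If `f` has negative derivative at a zero `x0`, there is a point just left of `x0`
(in any `(w, x0)`) where `f` is positive. -/
lemma PP.exists_pos_left {f : ℝ → ℝ} {d x0 w : ℝ} (hd : HasDerivAt f d x0)
    (h0 : f x0 = 0) (hdneg : d < 0) (hw : w < x0) : ∃ x ∈ Set.Ioo w x0, 0 < f x := by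
  have ht : Tendsto (slope f x0) (𝓝[<] x0) (𝓝 d) :=
    (hasDerivAt_iff_tendsto_slope.1 hd).mono_left
      (nhdsWithin_mono _ (fun y hy => ne_of_lt hy))
  have hev : ∀ᶠ x in 𝓝[<] x0, slope f x0 x < 0 := ht.eventually_lt_const hdneg
  have hmem : Set.Ioo w x0 ∈ 𝓝[<] x0 :=
    Ioo_mem_nhdsLT_of_mem (show x0 ∈ Ioc w x0 from ⟨hw, le_refl _⟩)
  have : ∀ᶠ x in 𝓝[<] x0, x ∈ Set.Ioo w x0 ∧ slope f x0 x < 0 :=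
    (Filter.eventually_iff.mpr hmem).and hev
  obtain ⟨x, hx, hs⟩ := this.exists
  refine ⟨x, hx, ?_⟩
  rw [slope_def_field, h0] at hs
  have hx0 : x - x0 < 0 := by linarith [hx.2]
  by_contra hfx
  push_neg at hfx
  have : 0 ≤ (f x - 0) / (x - x0) := by
    rw [div_nonneg_iff]; right; constructor <;> linarith
  linarith

lemma PP.exists_neg_left {f : ℝ → ℝ} {d x0 w : ℝ} (hd : HasDerivAt f d x0)
    (h0 : f x0 = 0) (hdpos : 0 < d) (hw : w < x0) : ∃ x ∈ Set.Ioo w x0, f x < 0 := by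
  obtain ⟨x, hx, h⟩ := PP.exists_pos_left (f := fun x => -f x) hd.neg (by simp [h0])
    (by linarith) hw
  exact ⟨x, hx, by linarith [h]⟩

/-- Sign propagation from the left endpoint. -/
lemma PP.pos_of_left {f : ℝ → ℝ} (hf : Continuous f) {u v : ℝ} (hu : 0 < f u)
    (hroot : ∀ x ∈ Set.Ioo u v, f x ≠ 0) : ∀ x ∈ Set.Ioo u v, 0 < f x := by
  intro x hx
  rcases lt_trichotomy (f x) 0 with h | h | h
  · exfalso
    obtain ⟨t, ht, hft⟩ := intermediate_value_Ioo' (le_of_lt hx.1) hf.continuousOn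
      (show (0:ℝ) ∈ Set.Ioo (f x) (f u) from ⟨h, hu⟩)
    exact hroot t ⟨ht.1, lt_trans ht.2 hx.2⟩ hft
  · exact absurd h (hroot x hx)
  · exact h

lemma PP.pos_of_right {f : ℝ → ℝ} (hf : Continuous f) {u v : ℝ} (hv : 0 < f v)
    (hroot : ∀ x ∈ Set.Ioo u v, f x ≠ 0) : ∀ x ∈ Set.Ioo u v, 0 < f x := by
  intro x hx
  rcases lt_trichotomy (f x) 0 with h | h | h
  · exfalso
    obtain ⟨t, ht, hft⟩ := intermediate_value_Ioo (le_of_lt hx.2) hf.continuousOn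
      (show (0:ℝ) ∈ Set.Ioo (f x) (f v) from ⟨h, hv⟩)
    exact hroot t ⟨lt_trans hx.1 ht.1, ht.2⟩ hft
  · exact absurd h (hroot x hx)
  · exact h

lemma PP.neg_of_right {f : ℝ → ℝ} (hf : Continuous f) {u v : ℝ} (hv : f v < 0)
    (hroot : ∀ x ∈ Set.Ioo u v, f x ≠ 0) : ∀ x ∈ Set.Ioo u v, f x < 0 := by
  intro x hx
  have := PP.pos_of_right (f := fun x => -f x) hf.neg (v := v)
    (by show (0:ℝ) < -f v; linarith)
    (fun t ht h => hroot t ht (by simpa using h)) x hx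
  simpa using this

lemma PP.neg_of_left {f : ℝ → ℝ} (hf : Continuous f) {u v : ℝ} (hu : f u < 0)
    (hroot : ∀ x ∈ Set.Ioo u v, f x ≠ 0) : ∀ x ∈ Set.Ioo u v, f x < 0 := by
  intro x hx
  have := PP.pos_of_left (f := fun x => -f x) hf.neg (u := u)
    (by show (0:ℝ) < -f u; linarith)
    (fun t ht h => hroot t ht (by simpa using h)) x hx
  simpa using this

/-- Three distinct reals can be sorted. -/
lemma PP.sort_three {a b c : ℝ} (hab : a ≠ b) (hac : a ≠ c) (hbc : b ≠ c) :
    ∃ x y z : ℝ, x < y ∧ y < z ∧ ({a, b, c} : Set ℝ) = {x, y, z} := by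
  rcases lt_trichotomy a b with h1 | h1 | h1
  · rcases lt_trichotomy b c with h2 | h2 | h2
    · exact ⟨a, b, c, h1, h2, rfl⟩
    · exact absurd h2 hbc
    · rcases lt_trichotomy a c with h3 | h3 | h3
      · exact ⟨a, c, b, h3, h2, by ext t; simp; tauto⟩
      · exact absurd h3 hac
      · exact ⟨c, a, b, h3, h1, by ext t; simp; tauto⟩
  · exact absurd h1 hab
  · rcases lt_trichotomy a c with h2 | h2 | h2
    · exact ⟨b, a, c, h1, h2, by ext t; simp; tauto⟩
    · exact absurd h2 hac
    · rcases lt_trichotomy b c with h3 | h3 | h3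
      · exact ⟨b, c, a, h3, h2, by ext t; simp; tauto⟩
      · exact absurd h3 hbc
      · exact ⟨c, b, a, h3, h1, by ext t; simp; tauto⟩

/-- Auxiliary cubic whose roots in `(m,1)` are the `x`-coordinates of equilibria. -/
noncomputable def PP.f (a k1 k2 m x : ℝ) : ℝ :=
  x * (1 - x) * (k1 + x - m) - a * (x - m) * (k2 + x - m)

/-- Derivative of `PP.f`. -/
noncomputable def PP.g (a k1 k2 m x : ℝ) : ℝ :=
  (1 - 2 * x) * (k1 + x - m) + x * (1 - x) - a * (k2 + x - m) - a * (x - m)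

lemma PP.f_cont (a k1 k2 m : ℝ) : Continuous (PP.f a k1 k2 m) := by
  unfold PP.f; fun_prop

lemma PP.f_deriv (a k1 k2 m x : ℝ) : HasDerivAt (PP.f a k1 k2 m) (PP.g a k1 k2 m x) x := by
  have h1 : HasDerivAt (fun x : ℝ => x * (1 - x) * (k1 + x - m))
      ((1 - 2*x) * (k1 + x                   - m) + x * (1 - x)) x := by
    have := (((hasDerivAt_id x).mul ((hasDerivAt_const x 1).sub (hasDerivAt_id x))).mul
      (((hasDerivAt_const x k1).add (hasDerivAt_id x)).sub (hasDerivAt_const x m)))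
    exact this.congr_deriv (by simp only [Pi.mul_apply, Pi.sub_apply, Pi.add_apply, id_eq]; ring)
  have h2 : HasDerivAt (fun x : ℝ => a * (x - m) * (k2 + x - m))
      (a * (k2 + x - m) + a * (x - m)) x := by
    have := (((hasDerivAt_const x a).mul ((hasDerivAt_id x).sub (hasDerivAt_const x m))).mul
      (((hasDerivAt_const x k2).add (hasDerivAt_id x)).sub (hasDerivAt_const x m)))
    exact this.congr_deriv (by simp only [Pi.mul_apply, Pi.sub_apply, Pi.add_apply, id_eq]; ring)
  have := h1.sub h2
  exact this.congr_deriv (by unfold PP.g; ring)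

/-- Any finite set of roots of the cubic has at most 3 elements. -/
lemma PP.card_roots_le (a k1 k2 m : ℝ) (R : Set ℝ) (hR : ∀ x ∈ R, PP.f a k1 k2 m x = 0) :
    R.Finite ∧ R.ncard ≤ 3 := by
  set P : Polynomial ℝ := C (a*m*k2 - a*m^2) + C (k1 - m - a*k2 + 2*a*m) * X +
    C (1 - k1 + m - a) * X^2 - X^3 with hP
  have heval : ∀ x : ℝ, P.eval x = PP.f a k1 k2 m x := by
    intro x; simp [hP, PP.f]; ring
  have hc3 : P.coeff 3 = -1 := by
    rw [hP]
    simp only [coeff_add, coeff_sub, coeff_C_mul, coeff_X_pow, coeff_C, coeff_X]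
    norm_num
  have hP0 : P ≠ 0 := fun h => by simp [h] at hc3
  have hdeg : P.natDegree ≤ 3 := by
    rw [hP]; compute_degree
  have hsub : R ⊆ {x | P.IsRoot x} := by
    intro x hx; simp [IsRoot, heval x, hR x hx]
  have hfin : R.Finite := (Polynomial.finite_setOf_isRoot hP0).subset hsub
  refine ⟨hfin, ?_⟩
  rw [Set.ncard_eq_toFinset_card R hfin]
  have hsub2 : hfin.toFinset ⊆ P.roots.toFinset := by
    intro x hx
    rw [Multiset.mem_toFinset, mem_roots hP0]
    exact hsub (hfin.mem_toFinset.1 hx)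
  calc hfin.toFinset.card ≤ P.roots.toFinset.card := Finset.card_le_card hsub2
    _ ≤ Multiset.card P.roots := Multiset.toFinset_card_le _
    _ ≤ P.natDegree := P.card_roots'
    _ ≤ 3 := hdeg

/-- Values at the endpoints. -/
lemma PP.f_m_pos (a k1 k2 m : ℝ) (hk1 : 0 < k1) (hm0 : 0 < m) (hm1 : m < 1) :
    0 < PP.f a k1 k2 m m := by
  unfold PP.f
  have : m * (1 - m) * (k1 + m - m) - a * (m - m) * (k2 + m - m) = m * (1-m) * k1 := by ring
  rw [this]
  have : 0 < 1 - m := by linarith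
  positivity

lemma PP.f_one_neg (a k1 k2 m : ℝ) (ha : 0 < a) (hk2 : 0 < k2) (hm1 : m < 1) :
    PP.f a k1 k2 m 1 < 0 := by
  unfold PP.f
  have h1 : (1:ℝ) * (1 - 1) * (k1 + 1 - m) - a * (1 - m) * (k2 + 1 - m)
      = -(a * (1 - m) * (k2 + 1 - m)) := by ring
  rw [h1]
  have h2 : 0 < 1 - m := by linarith
  have h3 : 0 < k2 + 1 - m := by linarith
  nlinarith [mul_pos (mul_pos ha h2) h3]

/-- Characterization of the equilibrium set. -/
lemma PP.mem_S (a b k1 k2 m : ℝ) (ha : 0 < a) (hb : 0 < b) (hk1 : 0 < k1) (hk2 : 0 < k2)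
    (hm0 : 0 < m) (hm1 : m < 1) (p : ℝ × ℝ) :
    (0 < p.1 ∧ 0 < p.2 ∧ preyRHS a k1 m p.1 p.2 = 0 ∧ predRHS b k2 m p.1 p.2 = 0) ↔
    (p.1 ∈ Set.Ioo m 1 ∧ PP.f a k1 k2 m p.1 = 0 ∧ p.2 = k2 + p.1 - m) := by
  obtain ⟨x, y⟩ := p
  simp only [preyRHS, predRHS]
  constructor
  · rintro ⟨hx, hy, h1, h2⟩
    -- from h2: y = k2 + max 0 (x-m)
    have hM : 0 ≤ max 0 (x - m) := le_max_left _ _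
    have hk2M : 0 < k2 + max 0 (x - m) := by linarith
    have hy' : y = k2 + max 0 (x - m) := by
      have h2' : 1 - y / (k2 + max 0 (x-m)) = 0 := by
        rcases mul_eq_zero.1 h2 with h | h
        · rcases mul_eq_zero.1 h with h | h
          · exact absurd h (ne_of_gt hb)
          · exact absurd h (ne_of_gt hy)
        · exact h
      field_simp at h2'
      linarith
    -- show m < x
    have hxm : m < x := by
      by_contra hxm
      push_neg at hxm
      have hmax : max 0 (x - m) = 0 := max_eq_left (by linarith)
      rw [hmax] at h1
      simp at h1
      rcases h1 with h | h
      · exact absurd h (ne_of_gt hx)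
      · -- x = 1 but x ≤ m < 1
        have : x = 1 := by linarith
        linarith
    have hmax : max 0 (x - m) = x - m := max_eq_right (by linarith)
    rw [hmax] at h1 hy'
    have hK : 0 < k1 + (x - m) := by linarith
    -- h1 : x(1-x) - a y (x-m)/(k1+(x-m)) = 0
    have hf : PP.f a k1 k2 m x = 0 := by
      unfold PP.f
      have h1' : x * (1 - x) * (k1 + (x - m)) - a * y * (x - m) = 0 := by
        field_simp at h1
        linarith [h1]
      rw [hy'] at h1'
      nlinarith [h1']
    -- x < 1
    have hx1 : x < 1 := by
      by_contra hx1
      push_neg at hx1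
      have hxx : x * (1 - x) ≤ 0 :=
        mul_nonpos_of_nonneg_of_nonpos (le_of_lt hx) (by linarith)
      have hle : x * (1-x) * (k1 + x - m) ≤ 0 :=
        mul_nonpos_of_nonpos_of_nonneg hxx (by linarith)
      have h2 : 0 < a * (x - m) * (k2 + x - m) :=
        mul_pos (mul_pos ha (by linarith)) (by linarith)
      unfold PP.f at hf
      linarith
    exact ⟨⟨hxm, hx1⟩, hf, by linarith [hy']⟩
  · rintro ⟨⟨hxm, hx1⟩, hf, hy⟩
    have hx : 0 < x := lt_trans hm0 hxm
    have hmax : max 0 (x - m) = x - m := max_eq_right (by linarith)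
    have hK : 0 < k1 + (x - m) := by linarith
    have hy' : 0 < y := by rw [hy]; linarith
    refine ⟨hx, hy', ?_, ?_⟩
    · rw [hmax, hy]
      unfold PP.f at hf
      field_simp
      nlinarith [hf]
    · rw [hmax, hy]
      have : k2 + (x - m) ≠ 0 := by linarith
      field_simp
      ring

lemma PP.detJ_eq (a b k1 k2 m x : ℝ) (hk1 : 0 < k1) (hx : m < x)
    (hf : PP.f a k1 k2 m x = 0) :
    detJ a b k1 m x (k2 + x - m) = -(b / (k1 + x - m)) * PP.g a k1 k2 m x := by
  have hK : k1 + x - m ≠ 0 := by intro h; nlinarith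
  unfold detJ PP.g
  unfold PP.f at hf
  field_simp
  ring_nf
  linear_combination b * hf

end PPhelp

/-- Poincaré-index consequences when `0 < m < 1`: if all equilibria in the open quadrant
are hyperbolic, their number is 1 or 3; if 1, it is a node or focus (`det J > 0`); if 3,
exactly one is a saddle (`det J < 0`) and the two others are nodes or foci. -/
theorem poincare_index_m_pos (a b k1 k2 m : ℝ)
    (ha : 0 < a) (hb : 0 < b) (hk1 : 0 < k1) (hk2 : 0 < k2)
    (hm0 : 0 < m) (hm1 : m < 1)
    (S : Set (ℝ × ℝ))
    (hS : S = {p : ℝ × ℝ | 0 < p.1 ∧ 0 < p.2 ∧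
      preyRHS a k1 m p.1 p.2 = 0 ∧ predRHS b k2 m p.1 p.2 = 0})
    (hhyp : ∀ p ∈ S, detJ a b k1 m p.1 p.2 ≠ 0 ∧
      (0 < detJ a b k1 m p.1 p.2 → traceJ a b k1 m p.1 p.2 ≠ 0)) :
    (S.ncard = 1 ∨ S.ncard = 3) ∧
    (S.ncard = 1 → ∀ p ∈ S, 0 < detJ a b k1 m p.1 p.2) ∧
    (S.ncard = 3 → ∃ p ∈ S, detJ a b k1 m p.1 p.2 < 0 ∧
      ∀ q ∈ S, q ≠ p → 0 < detJ a b k1 m q.1 q.2) := by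
  subst hS
  set F := PP.f a k1 k2 m with hF
  set G := PP.g a k1 k2 m with hG
  set R : Set ℝ := {x | x ∈ Set.Ioo m 1 ∧ F x = 0} with hR
  -- membership characterization
  have hmemS : ∀ p : ℝ × ℝ, (p ∈ {p : ℝ × ℝ | 0 < p.1 ∧ 0 < p.2 ∧
      preyRHS a k1 m p.1 p.2 = 0 ∧ predRHS b k2 m p.1 p.2 = 0}) ↔
      (p.1 ∈ R ∧ p.2 = k2 + p.1 - m) := by
    intro p
    rw [Set.mem_setOf_eq, PP.mem_S a b k1 k2 m ha hb hk1 hk2 hm0 hm1 p]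
    constructor
    · rintro ⟨h1, h2, h3⟩; exact ⟨⟨h1, h2⟩, h3⟩
    · rintro ⟨⟨h1, h2⟩, h3⟩; exact ⟨h1, h2, h3⟩
  set S : Set (ℝ × ℝ) := {p : ℝ × ℝ | 0 < p.1 ∧ 0 < p.2 ∧
      preyRHS a k1 m p.1 p.2 = 0 ∧ predRHS b k2 m p.1 p.2 = 0} with hSdef
  have hSimg : S = (fun x => (x, k2 + x - m)) '' R := by
    ext p
    rw [hmemS p]
    constructor
    · rintro ⟨h1, h2⟩
      exact ⟨p.1, h1, by simp only []; exact Prod.ext rfl h2.symm⟩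
    · rintro ⟨x, hx, rfl⟩
      exact ⟨hx, rfl⟩
  have hncard : S.ncard = R.ncard := by
    rw [hSimg]
    exact Set.ncard_image_of_injOn (fun x _ y _ h => congrArg Prod.fst h)
  -- basic facts about F
  have hcont : Continuous F := PP.f_cont a k1 k2 m
  have hfm : 0 < F m := PP.f_m_pos a k1 k2 m hk1 hm0 hm1
  have hf1 : F 1 < 0 := PP.f_one_neg a k1 k2 m ha hk2 hm1
  have hcard := PP.card_roots_le a k1 k2 m R (fun x hx => hx.2)
  obtain ⟨hfin, hle3⟩ := hcard
  -- R is nonempty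
  have hnonempty : R.Nonempty := by
    obtain ⟨t, ht, hft⟩ := intermediate_value_Ioo' (le_of_lt hm1) hcont.continuousOn
      (show (0:ℝ) ∈ Set.Ioo (F 1) (F m) from ⟨hf1, hfm⟩)
    exact ⟨t, ht, hft⟩
  have h1le : 1 ≤ R.ncard := (Set.ncard_pos hfin).mpr hnonempty
  -- detJ at a root
  have hdetJ : ∀ x ∈ R, detJ a b k1 m x (k2 + x - m) = -(b / (k1 + x - m)) * G x :=
    fun x hx => PP.detJ_eq a b k1 k2 m x hk1 hx.1.1 hx.2
  have hKpos : ∀ x ∈ R, 0 < k1 + x - m := fun x hx => by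
    have := hx.1.1; linarith
  -- hyperbolicity gives G ≠ 0 at roots
  have hgne : ∀ x ∈ R, G x ≠ 0 := by
    intro x hx hgx
    have hpS : ((x, k2 + x - m) : ℝ × ℝ) ∈ S := (hmemS _).mpr ⟨hx, rfl⟩
    have := (hhyp _ hpS).1
    rw [hdetJ x hx, hgx] at this
    simp at this
  have hdetpos : ∀ x ∈ R, G x < 0 → 0 < detJ a b k1 m x (k2 + x - m) := by
    intro x hx hgx
    rw [hdetJ x hx]
    have := hKpos x hx
    have hbk : 0 < b / (k1 + x - m) := by positivity
    nlinarith
  have hdetneg : ∀ x ∈ R, 0 < G x → detJ a b k1 m x (k2 + x - m) < 0 := by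
    intro x hx hgx
    rw [hdetJ x hx]
    have := hKpos x hx
    have hbk : 0 < b / (k1 + x - m) := by positivity
    nlinarith
  -- no-root transfer
  have hnr : ∀ u v : ℝ, m ≤ u → v ≤ 1 → (∀ z ∈ R, z ≤ u ∨ v ≤ z) →
      ∀ x ∈ Set.Ioo u v, F x ≠ 0 := by
    intro u v hu hv hz x hx hfx
    have hxR : x ∈ R := ⟨⟨lt_of_le_of_lt hu hx.1, lt_of_lt_of_le hx.2 hv⟩, hfx⟩
    rcases hz x hxR with h | h
    · linarith [hx.1]
    · linarith [hx.2]
  -- the maximal root has G < 0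
  have hmax_neg : ∀ xM ∈ R, (∀ z ∈ R, z ≤ xM) → G xM < 0 := by
    intro xM hxM hmax
    have hx1 : xM < 1 := hxM.1.2
    have hnru : ∀ x ∈ Set.Ioo xM 1, F x ≠ 0 :=
      hnr xM 1 (le_of_lt hxM.1.1) (le_refl _) (fun z hz => Or.inl (hmax z hz))
    have hneg : ∀ x ∈ Set.Ioo xM 1, F x < 0 := PP.neg_of_right hcont hf1 hnru
    have hle : G xM ≤ 0 := PP.deriv_nonpos_of_right (PP.f_deriv a k1 k2 m xM) hxM.2 hx1
      (fun x hx => le_of_lt (hneg x hx))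
    exact lt_of_le_of_ne hle (hgne xM hxM)
  -- main case analysis
  have hgoal : R.ncard = 1 ∨ R.ncard = 3 := by
    interval_cases h : R.ncard
    · exact Or.inl rfl
    · -- two roots: contradiction
      exfalso
      obtain ⟨p, q, hpq, hRpq⟩ := Set.ncard_eq_two.mp h
      obtain ⟨x1, x2, hx12, hRs⟩ : ∃ x1 x2 : ℝ, x1 < x2 ∧ R = {x1, x2} := by
        rcases lt_or_gt_of_ne hpq with hlt | hlt
        · exact ⟨p, q, hlt, hRpq⟩
        · exact ⟨q, p, hlt, by rw [hRpq]; ext t; simp; tauto⟩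
      have hx1R : x1 ∈ R := by rw [hRs]; left; rfl
      have hx2R : x2 ∈ R := by rw [hRs]; right; rfl
      have hg2 : G x2 < 0 := hmax_neg x2 hx2R (by
        intro z hz; rw [hRs] at hz
        rcases hz with rfl | rfl
        · linarith
        · exact le_refl z)
      -- F is positive somewhere in (x1, x2)
      obtain ⟨t, ht, hft⟩ := PP.exists_pos_left (PP.f_deriv a k1 k2 m x2) hx2R.2 hg2 hx12
      have hnr12 : ∀ x ∈ Set.Ioo x1 x2, F x ≠ 0 :=
        hnr x1 x2 (le_of_lt hx1R.1.1) (le_of_lt hx2R.1.2) (by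
          intro z hz; rw [hRs] at hz
          rcases hz with rfl | rfl
          · exact Or.inl (le_refl _)
          · exact Or.inr (le_refl _))
      -- F > 0 on (x1, x2)
      have hpos12 : ∀ x ∈ Set.Ioo x1 x2, 0 < F x := by
        intro x hx
        rcases lt_trichotomy x t with hxt | rfl | hxt
        · exact PP.pos_of_right hcont hft (fun z hz => hnr12 z ⟨hz.1, lt_trans hz.2 ht.2⟩)
            x ⟨hx.1, hxt⟩
        · exact hft
        · exact PP.pos_of_left hcont hft (fun z hz => hnr12 z ⟨lt_trans ht.1 hz.1, hz.2⟩)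
            x ⟨hxt, hx.2⟩
      have hge : 0 ≤ G x1 := PP.deriv_nonneg_of_right (PP.f_deriv a k1 k2 m x1) hx1R.2 hx12
        (fun x hx => le_of_lt (hpos12 x hx))
      -- F > 0 on (m, x1)
      have hnrm1 : ∀ x ∈ Set.Ioo m x1, F x ≠ 0 :=
        hnr m x1 (le_refl _) (le_of_lt hx1R.1.2) (by
          intro z hz; rw [hRs] at hz
          rcases hz with rfl | rfl
          · exact Or.inr (le_refl _)
          · exact Or.inr (le_of_lt hx12))
      have hposm1 : ∀ x ∈ Set.Ioo m x1, 0 < F x := PP.pos_of_left hcont hfm hnrm1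
      have hle : G x1 ≤ 0 := PP.deriv_nonpos_of_left (PP.f_deriv a k1 k2 m x1) hx1R.2
        hx1R.1.1 (fun x hx => le_of_lt (hposm1 x hx))
      exact hgne x1 hx1R (le_antisymm hle hge)
    · exact Or.inr rfl
  -- conclusion part 2 : one equilibrium
  refine ⟨by rw [hncard]; exact hgoal, ?_, ?_⟩
  · intro hone p hp
    rw [hncard] at hone
    obtain ⟨x1, hRs⟩ := Set.ncard_eq_one.mp hone
    have hx1R : x1 ∈ R := by rw [hRs]; rfl
    have hg1 : G x1 < 0 := hmax_neg x1 hx1R (by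
      intro z hz; rw [hRs] at hz; rw [hz])
    obtain ⟨hpR, hp2⟩ := (hmemS p).mp hp
    have hpx : p.1 = x1 := by rw [hRs] at hpR; exact hpR
    have : detJ a b k1 m p.1 p.2 = detJ a b k1 m x1 (k2 + x1 - m) := by rw [hpx, hp2, hpx]
    rw [this]
    exact hdetpos x1 hx1R hg1
  · intro hthree
    rw [hncard] at hthree
    obtain ⟨xa, xb, xc, hab, hac, hbc, hRabc⟩ := Set.ncard_eq_three.mp hthree
    obtain ⟨x1, x2, x3, h12, h23, habc⟩ := PP.sort_three hab hac hbc
    have hRs : R = {x1, x2, x3} := by rw [hRabc, habc]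
    have hx1R : x1 ∈ R := by rw [hRs]; left; rfl
    have hx2R : x2 ∈ R := by rw [hRs]; right; left; rfl
    have hx3R : x3 ∈ R := by rw [hRs]; right; right; rfl
    -- G x3 < 0
    have hg3 : G x3 < 0 := hmax_neg x3 hx3R (by
      intro z hz; rw [hRs] at hz
      rcases hz with rfl | rfl | rfl
      · linarith
      · linarith
      · exact le_refl z)
    -- F > 0 on (x2, x3)
    obtain ⟨t, ht, hft⟩ := PP.exists_pos_left (PP.f_deriv a k1 k2 m x3) hx3R.2 hg3 h23
    have hnr23 : ∀ x ∈ Set.Ioo x2 x3, F x ≠ 0 :=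
      hnr x2 x3 (le_of_lt hx2R.1.1) (le_of_lt hx3R.1.2) (by
        intro z hz; rw [hRs] at hz
        rcases hz with rfl | rfl | rfl
        · exact Or.inl (le_of_lt h12)
        · exact Or.inl (le_refl _)
        · exact Or.inr (le_refl _))
    have hpos23 : ∀ x ∈ Set.Ioo x2 x3, 0 < F x := by
      intro x hx
      rcases lt_trichotomy x t with hxt | rfl | hxt
      · exact PP.pos_of_right hcont hft (fun z hz => hnr23 z ⟨hz.1, lt_trans hz.2 ht.2⟩)
          x ⟨hx.1, hxt⟩
      · exact hft
      · exact PP.pos_of_left hcont hft (fun z hz => hnr23 z ⟨lt_trans ht.1 hz.1, hz.2⟩)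
          x ⟨hxt, hx.2⟩
    -- G x2 > 0
    have hg2 : 0 < G x2 := by
      have hge : 0 ≤ G x2 := PP.deriv_nonneg_of_right (PP.f_deriv a k1 k2 m x2) hx2R.2 h23
        (fun x hx => le_of_lt (hpos23 x hx))
      exact lt_of_le_of_ne hge (Ne.symm (hgne x2 hx2R))
    -- F < 0 on (x1, x2)
    obtain ⟨s, hs, hfs⟩ := PP.exists_neg_left (PP.f_deriv a k1 k2 m x2) hx2R.2 hg2 h12
    have hnr12 : ∀ x ∈ Set.Ioo x1 x2, F x ≠ 0 :=
      hnr x1 x2 (le_of_lt hx1R.1.1) (le_of_lt hx2R.1.2) (by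
        intro z hz; rw [hRs] at hz
        rcases hz with rfl | rfl | rfl
        · exact Or.inl (le_refl _)
        · exact Or.inr (le_refl _)
        · exact Or.inr (le_of_lt h23))
    have hneg12 : ∀ x ∈ Set.Ioo x1 x2, F x < 0 := by
      intro x hx
      rcases lt_trichotomy x s with hxs | rfl | hxs
      · exact PP.neg_of_right hcont hfs (fun z hz => hnr12 z ⟨hz.1, lt_trans hz.2 hs.2⟩)
          x ⟨hx.1, hxs⟩
      · exact hfs
      · exact PP.neg_of_left hcont hfs (fun z hz => hnr12 z ⟨lt_trans hs.1 hz.1, hz.2⟩)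
          x ⟨hxs, hx.2⟩
    -- G x1 < 0
    have hg1 : G x1 < 0 := by
      have hle : G x1 ≤ 0 := PP.deriv_nonpos_of_right (PP.f_deriv a k1 k2 m x1) hx1R.2 h12
        (fun x hx => le_of_lt (hneg12 x hx))
      exact lt_of_le_of_ne hle (hgne x1 hx1R)
    -- assemble
    refine ⟨(x2, k2 + x2 - m), (hmemS _).mpr ⟨hx2R, rfl⟩, hdetneg x2 hx2R hg2, ?_⟩
    intro q hq hqne
    obtain ⟨hqR, hq2⟩ := (hmemS q).mp hq
    have hq1 : q.1 ∈ ({x1, x2, x3} : Set ℝ) := by rw [← hRs]; exact hqR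
    have hqeq : q = (q.1, k2 + q.1 - m) := by
      ext
      · rfl
      · exact hq2
    rcases hq1 with h | h | h
    · have : detJ a b k1 m q.1 q.2 = detJ a b k1 m x1 (k2 + x1 - m) := by
        rw [hq2, h]
      rw [this]; exact hdetpos x1 hx1R hg1
    · exfalso; apply hqne; rw [hqeq, h]
    · have : detJ a b k1 m q.1 q.2 = detJ a b k1 m x3 (k2 + x3 - m) := by
        rw [hq2, h]
      rw [this]; exact hdetpos x3 hx3R hg3
end

section
/- Suppose k₂ > 1 − m and, in addition, either k₁ > 1 + m or a·k₂ + k₁ > 2 + 1/12. Then the system (S) has no nonconstant periodic solution: there is no nonconstant periodic pair of differentiable functions (x,y) : ℝ → (0,∞)² satisfying (S). -/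
open Filter Topology

/-- The "prey isocline" function `h(z) = z(1−z)(k₁+z−m)/(z−m)`. -/
noncomputable def hfun (k1 m z : ℝ) : ℝ := z*(1-z)*(k1+(z-m))/(z-m)

lemma keyFalse {a k1 k2 m x : ℝ} (ha : 0 < a) (hk1 : 0 < k1) (hk2 : 0 < k2)
    (hm0 : 0 ≤ m) (hm1 : m < 1)
    (hcond2 : k1 > 1 + m ∨ a * k2 + k1 > 2 + 1 / 12)
    (hx1 : m < x) (hx2 : x < 1)
    (hder : k1*(x^2+m*(1-2*x)) ≤ (1-2*x)*(x-m)^2)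
    (hlev : a*k2*(x-m) ≤ x*(1-x)*(k1+(x-m))) : False := by
  have hu : 0 < x - m := sub_pos.2 hx1
  have hx0 : 0 < x := lt_of_le_of_lt hm0 hx1
  have hE : 0 < x^2+m*(1-2*x) := by
    nlinarith [mul_pos (sub_pos.2 hm1) (mul_pos hx0 hx0), mul_nonneg hm0 (sq_nonneg (x-1))]
  have h2x : 0 < 1 - 2*x := by
    rcases lt_or_ge 0 (1-2*x) with h | h
    · exact h
    · exfalso
      nlinarith [mul_pos hk1 hE, mul_nonneg (neg_nonneg.2 h) (sq_nonneg (x-m))]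
  rcases hcond2 with hc | hc
  · nlinarith [mul_pos hu hu, sq_nonneg (x-m), mul_nonneg hm0 h2x.le,
      mul_lt_mul_of_pos_right (show (1:ℝ) - 2*x < 1 by nlinarith) (mul_pos hu hu)]
  · have hS : 0 < x*(1-x)+(x-m) := by nlinarith
    have step1 : (x-m)*(x*(1-x)+(x-m)) ≤ (2-x)*(x^2+m*(1-2*x)) := by
      nlinarith [mul_nonneg hm0 h2x.le, sq_nonneg (x-m)]
    have A1 : k1*(x*(1-x)+(x-m)) * (x^2+m*(1-2*x)) ≤ (1-2*x)*(x-m)^2*(x*(1-x)+(x-m)) := by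
      nlinarith [mul_le_mul_of_nonneg_right hder hS.le]
    have A2 : (1-2*x)*(x-m)^2*(x*(1-x)+(x-m)) ≤ ((1-2*x)*(2-x)*(x-m)) * (x^2+m*(1-2*x)) := by
      have := mul_le_mul_of_nonneg_left step1 (mul_nonneg h2x.le hu.le)
      nlinarith [this]
    have step2 : k1*(x*(1-x)+(x-m)) ≤ (1-2*x)*(2-x)*(x-m) :=
      le_of_mul_le_mul_right (by nlinarith [A1, A2]) hE
    nlinarith [step2, mul_pos hx0 hu, mul_le_mul_of_nonneg_right (le_of_lt hc) hu.le]

lemma hfun_deriv (k1 m : ℝ) {w : ℝ} (hw : m < w) :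
    HasDerivAt (hfun k1 m)
      ((((1-2*w)*(k1+(w-m)) + w*(1-w))*(w-m) - w*(1-w)*(k1+(w-m))*1)/(w-m)^2) w := by
  have hu : w - m ≠ 0 := ne_of_gt (sub_pos.2 hw)
  have h1 : HasDerivAt (fun z : ℝ => z*(1-z)*(k1+(z-m))) ((1-2*w)*(k1+(w-m)) + w*(1-w)) w := by
    have h := (((hasDerivAt_id w).mul ((hasDerivAt_const w (1:ℝ)).sub (hasDerivAt_id w))).mul
      (((hasDerivAt_const w k1).add ((hasDerivAt_id w).sub (hasDerivAt_const w m)))))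
    simp only [id_eq] at h
    refine HasDerivAt.congr_deriv h ?_
    simp only [Pi.mul_apply, Pi.sub_apply, Pi.add_apply, id_eq]
    ring
  have h2 : HasDerivAt (fun z : ℝ => z - m) 1 w := (hasDerivAt_id w).sub_const m
  exact h1.div h2 hu

lemma hfun_contOn (k1 m : ℝ) {s : Set ℝ} (hs : ∀ z ∈ s, m < z) :
    ContinuousOn (hfun k1 m) s := by
  apply ContinuousOn.div
  · fun_prop
  · fun_prop
  · intro z hz; exact ne_of_gt (sub_pos.2 (hs z hz))


noncomputable def lyap (a b k1 k2 m xs : ℝ) (x y : ℝ → ℝ) : ℝ → ℝ := fun s =>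
  (x s - m) - (k1*(xs-m)/k2)*Real.log (x s - m)
    + (k1 - (xs-m) - k2 + k1*(xs-m)/k2)*Real.log (k2+(x s - m))
    + (a/b)*(y s - (k2+(xs-m))*Real.log (y s))

lemma lyap_deriv (a b k1 k2 m xs : ℝ) (x y : ℝ → ℝ) (t : ℝ)
    (hb : 0 < b) (hk2 : 0 < k2) (hk1 : 0 < k1)
    (hmx : m < x t) (hy : 0 < y t)
    (hdx : HasDerivAt x (preyRHS a k1 m (x t) (y t)) t)
    (hdy : HasDerivAt y (predRHS b k2 m (x t) (y t)) t) :
    HasDerivAt (lyap a b k1 k2 m xs x y)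
      (((x t - xs)*(hfun k1 m (x t) - a*(k2+(xs-m))) - a*(y t - (k2+(xs-m)))^2)/(k2+(x t - m))) t := by
  have hu : (0:ℝ) < x t - m := sub_pos.2 hmx
  have hune : x t - m ≠ 0 := ne_of_gt hu
  have hP : (0:ℝ) < k2 + (x t - m) := by linarith
  have hPne : k2 + (x t - m) ≠ 0 := ne_of_gt hP
  have hyne : y t ≠ 0 := ne_of_gt hy
  have hk1u : (0:ℝ) < k1 + (x t - m) := by linarith
  have hmeq : max 0 (x t - m) = x t - m := max_eq_right hu.le
  have d1 : HasDerivAt (fun s => x s - m) (preyRHS a k1 m (x t) (y t)) t := hdx.sub_const m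
  have d2 := d1.log hune
  have d3 : HasDerivAt (fun s => k2 + (x s - m)) (preyRHS a k1 m (x t) (y t)) t := d1.const_add k2
  have d4 := d3.log hPne
  have d5 := hdy.log hyne
  have hraw := ((d1.sub (d2.const_mul (k1*(xs-m)/k2))).add
      (d4.const_mul (k1 - (xs-m) - k2 + k1*(xs-m)/k2))).add
    ((hdy.sub (d5.const_mul (k2+(xs-m)))).const_mul (a/b))
  refine HasDerivAt.congr_deriv hraw ?_
  simp only [preyRHS, predRHS, hfun, hmeq]
  field_simp
  ring

lemma dc_lemma {a k1 k2 m x₁ x₂ : ℝ} (ha : 0 < a) (hk1 : 0 < k1) (hk2 : 0 < k2)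
    (hm0 : 0 ≤ m) (hm1 : m < 1)
    (hcond2 : k1 > 1 + m ∨ a * k2 + k1 > 2 + 1 / 12)
    (h1 : m < x₁) (h12 : x₁ < x₂) (h2 : x₂ < 1)
    (hlev : a*k2 ≤ hfun k1 m x₂) : hfun k1 m x₂ ≤ hfun k1 m x₁ := by
  by_contra hlt
  push_neg at hlt
  set c := hfun k1 m x₂ with hc
  have hu2 : 0 < x₂ - m := by linarith
  have hc0 : 0 < c := lt_of_lt_of_le (mul_pos ha hk2) hlev
  set δ := min (1-x₂) (c*(x₂-m)/(k1+1)) with hδdef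
  have hδ : 0 < δ := lt_min (by linarith) (by positivity)
  have hδle : δ ≤ 1 - x₂ := min_le_left _ _
  have hδle2 : δ ≤ c*(x₂-m)/(k1+1) := min_le_right _ _
  set r := 1 - δ/2 with hrdef
  have hx₂r : x₂ < r := by simp only [hrdef]; linarith
  have hr1 : r < 1 := by simp only [hrdef]; linarith
  have hrm : m < r := by linarith
  have hfr : hfun k1 m r < c := by
    have hur : 0 < r - m := by linarith
    have hr0 : 0 < r := by linarith
    have haux : 0 ≤ (k1+1) - r*(k1+(r-m)) := by nlinarith
    have hnum : r*(1-r)*(k1+(r-m)) ≤ (1-r)*(k1+1) := by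
      nlinarith [mul_nonneg (sub_nonneg.2 hr1.le) haux]
    have hb1 : hfun k1 m r ≤ (1-r)*(k1+1)/(x₂-m) := by
      rw [hfun]
      exact div_le_div₀ (mul_nonneg (by linarith) (by linarith)) hnum hu2 (by linarith)
    have hb2 : (1-r)*(k1+1)/(x₂-m) < c := by
      rw [div_lt_iff₀ hu2]
      have h1r : 1 - r = δ/2 := by simp only [hrdef]; ring
      rw [h1r]
      have := (le_div_iff₀ (by positivity : (0:ℝ) < k1+1)).1 hδle2
      nlinarith
    linarith
  have hcont : ContinuousOn (hfun k1 m) (Set.Icc x₁ r) :=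
    hfun_contOn k1 m (fun z hz => lt_of_lt_of_le h1 hz.1)
  obtain ⟨w, hwmem, hwmax⟩ := isCompact_Icc.exists_isMaxOn
    (Set.nonempty_Icc.2 (by linarith)) hcont
  have hcw : c ≤ hfun k1 m w := hwmax ⟨h12.le, hx₂r.le⟩
  have hw1 : x₁ < w := by
    rcases eq_or_lt_of_le hwmem.1 with h | h
    · exfalso; rw [← h] at hcw; linarith
    · exact h
  have hwr : w < r := by
    rcases eq_or_lt_of_le hwmem.2 with h | h
    · exfalso; rw [h] at hcw; linarith
    · exact h
  have hloc : IsLocalMax (hfun k1 m) w := hwmax.isLocalMax (Icc_mem_nhds hw1 hwr)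
  have hmw : m < w := lt_trans h1 hw1
  have huw : 0 < w - m := by linarith
  have hzero := hloc.hasDerivAt_eq_zero (hfun_deriv k1 m hmw)
  have hnum : ((1-2*w)*(k1+(w-m)) + w*(1-w))*(w-m) - w*(1-w)*(k1+(w-m)) = 0 := by
    have h2' : (w-m)^2 ≠ 0 := pow_ne_zero _ (ne_of_gt huw)
    field_simp at hzero
    linarith
  have hder' : k1*(w^2+m*(1-2*w)) ≤ (1-2*w)*(w-m)^2 := by nlinarith [hnum]
  have hlev' : a*k2*(w-m) ≤ w*(1-w)*(k1+(w-m)) := by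
    have hle : a*k2 ≤ hfun k1 m w := le_trans hlev hcw
    rw [hfun, le_div_iff₀ huw] at hle
    linarith
  exact keyFalse ha hk1 hk2 hm0 hm1 hcond2 hmw (lt_trans hwr hr1) hder' hlev'

lemma periodic_exists_max {f : ℝ → ℝ} {T : ℝ} (hT : 0 < T) (hf : Continuous f)
    (hper : Function.Periodic f T) : ∃ t₀, ∀ t, f t ≤ f t₀ := by
  obtain ⟨t₀, _, hmax⟩ := isCompact_Icc.exists_isMaxOn
    (Set.nonempty_Icc.2 hT.le) (hf.continuousOn (s := Set.Icc 0 T))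
  refine ⟨t₀, fun t => ?_⟩
  have h1 : f (toIcoMod hT 0 t) = f t := by
    have h2 : toIcoMod hT 0 t = t - toIcoDiv hT 0 t • T := rfl
    rw [h2, hper.sub_zsmul_eq]
  have hmem := toIcoMod_mem_Ico' hT t
  have h3 : f (toIcoMod hT 0 t) ≤ f t₀ := hmax (Set.mem_Icc.2 ⟨hmem.1, hmem.2.le⟩)
  rwa [h1] at h3

lemma periodic_exists_min {f : ℝ → ℝ} {T : ℝ} (hT : 0 < T) (hf : Continuous f)
    (hper : Function.Periodic f T) : ∃ t₀, ∀ t, f t₀ ≤ f t := by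
  have hpn : Function.Periodic (fun s => -(f s)) T := fun s => by simp [hper s]
  obtain ⟨t₀, h⟩ := periodic_exists_max hT hf.neg hpn
  exact ⟨t₀, fun t => by have := h t; simpa using this⟩

set_option maxHeartbeats 1600000 in
/-- (Bendixson–Dulac criterion.) If `k₂ > 1 − m` and moreover `k₁ > 1 + m` or
`a·k₂ + k₁ > 2 + 1/12`, then the system (S) has no nonconstant periodic solution. -/
theorem no_periodic_solution_dulac (a b k1 k2 m : ℝ)
    (ha : 0 < a) (hb : 0 < b) (hk1 : 0 < k1) (hk2 : 0 < k2)
    (hm0 : 0 ≤ m) (hm1 : m < 1)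
    (hcond1 : k2 > 1 - m)
    (hcond2 : k1 > 1 + m ∨ a * k2 + k1 > 2 + 1 / 12) :
    ¬ ∃ (x y : ℝ → ℝ) (T : ℝ), 0 < T ∧
      (∀ t : ℝ, 0 < x t ∧ 0 < y t) ∧
      (∀ t : ℝ, HasDerivAt x (preyRHS a k1 m (x t) (y t)) t) ∧
      (∀ t : ℝ, HasDerivAt y (predRHS b k2 m (x t) (y t)) t) ∧
      (∀ t : ℝ, x (t + T) = x t ∧ y (t + T) = y t) ∧
      ¬ (∃ c d : ℝ, ∀ t : ℝ, x t = c ∧ y t = d) := by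
  rintro ⟨x, y, T, hT, hpos, hdx, hdy, hper, hnc⟩
  have hxc : Continuous x := continuous_iff_continuousAt.2 (fun t => (hdx t).continuousAt)
  have hyc : Continuous y := continuous_iff_continuousAt.2 (fun t => (hdy t).continuousAt)
  have hxper : Function.Periodic x T := fun t => (hper t).1
  have hyper : Function.Periodic y T := fun t => (hper t).2
  obtain ⟨t₁, hmax⟩ := periodic_exists_max hT hxc hxper
  obtain ⟨s₁, hmin⟩ := periodic_exists_min hT hxc hxper
  obtain ⟨τ₁, hymax⟩ := periodic_exists_max hT hyc hyper
  obtain ⟨τ₂, hymin⟩ := periodic_exists_min hT hyc hyper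
  have hlm1 : IsLocalMax x t₁ := Filter.Eventually.of_forall hmax
  have hlm2 : IsLocalMin x s₁ := Filter.Eventually.of_forall hmin
  have hlm3 : IsLocalMax y τ₁ := Filter.Eventually.of_forall hymax
  have hlm4 : IsLocalMin y τ₂ := Filter.Eventually.of_forall hymin
  have hz1 : preyRHS a k1 m (x t₁) (y t₁) = 0 := hlm1.hasDerivAt_eq_zero (hdx t₁)
  have hz2 : preyRHS a k1 m (x s₁) (y s₁) = 0 := hlm2.hasDerivAt_eq_zero (hdx s₁)
  have hz3 : predRHS b k2 m (x τ₁) (y τ₁) = 0 := hlm3.hasDerivAt_eq_zero (hdy τ₁)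
  have hz4 : predRHS b k2 m (x τ₂) (y τ₂) = 0 := hlm4.hasDerivAt_eq_zero (hdy τ₂)
  -- the minimum of x is above m
  have hmlo : m < x s₁ := by
    by_contra hle
    push_neg at hle
    have hmx0 : max 0 (x s₁ - m) = 0 := max_eq_left (by linarith)
    simp only [preyRHS, hmx0, mul_zero, zero_div, sub_zero] at hz2
    rcases mul_eq_zero.1 hz2 with h | h
    · exact absurd h (ne_of_gt (hpos s₁).1)
    · have : x s₁ = 1 := by linarith
      linarith
  have hmx : ∀ t, m < x t := fun t => lt_of_lt_of_le hmlo (hmin t)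
  have hmaxeq : ∀ t, max 0 (x t - m) = x t - m := fun t =>
    max_eq_right (by linarith [hmx t])
  have hprey : ∀ t, preyRHS a k1 m (x t) (y t)
      = x t*(1-x t) - a*y t*(x t-m)/(k1+(x t-m)) := fun t => by
    rw [preyRHS, hmaxeq t]
  have hpred : ∀ t, predRHS b k2 m (x t) (y t)
      = b*y t*(1 - y t/(k2+(x t-m))) := fun t => by
    rw [predRHS, hmaxeq t]
  have hk1u : ∀ t, 0 < k1 + (x t - m) := fun t => by have := hmx t; linarith
  -- equations at the x-extrema
  have e1 : x t₁*(1-x t₁)*(k1+(x t₁-m)) = a*y t₁*(x t₁-m) := by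
    have h := hz1
    rw [hprey t₁] at h
    field_simp [ne_of_gt (hk1u t₁)] at h
    linarith
  have e2 : x s₁*(1-x s₁)*(k1+(x s₁-m)) = a*y s₁*(x s₁-m) := by
    have h := hz2
    rw [hprey s₁] at h
    field_simp [ne_of_gt (hk1u s₁)] at h
    linarith
  -- the maximum of x is below 1
  have hxhi1 : x t₁ < 1 := by
    by_contra hxx
    push_neg at hxx
    have hu1 : 0 < x t₁ - m := by linarith [hmx t₁]
    nlinarith [e1, mul_pos (mul_pos ha (hpos t₁).2) hu1,
      mul_nonneg (mul_nonneg (hpos t₁).1.le (sub_nonneg.2 hxx)) (hk1u t₁).le]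
  -- y extremal values
  have ey1 : y τ₁ = k2 + (x τ₁ - m) := by
    have h := hz3
    rw [hpred τ₁] at h
    have hP : (0:ℝ) < k2 + (x τ₁ - m) := by linarith [hmx τ₁]
    have h2 : 1 - y τ₁/(k2+(x τ₁-m)) = 0 := by
      rcases mul_eq_zero.1 h with h' | h'
      · rcases mul_eq_zero.1 h' with h'' | h''
        · exact absurd h'' (ne_of_gt hb)
        · exact absurd h'' (ne_of_gt (hpos τ₁).2)
      · exact h'
    field_simp [ne_of_gt hP] at h2
    linarith
  have ey2 : y τ₂ = k2 + (x τ₂ - m) := by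
    have h := hz4
    rw [hpred τ₂] at h
    have hP : (0:ℝ) < k2 + (x τ₂ - m) := by linarith [hmx τ₂]
    have h2 : 1 - y τ₂/(k2+(x τ₂-m)) = 0 := by
      rcases mul_eq_zero.1 h with h' | h'
      · rcases mul_eq_zero.1 h' with h'' | h''
        · exact absurd h'' (ne_of_gt hb)
        · exact absurd h'' (ne_of_gt (hpos τ₂).2)
      · exact h'
    field_simp [ne_of_gt hP] at h2
    linarith
  have hyub : ∀ t, y t ≤ k2 + (x t₁ - m) := fun t => by
    have h := hymax t
    rw [ey1] at h
    have := hmax τ₁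
    linarith
  have hylb : ∀ t, k2 + (x s₁ - m) ≤ y t := fun t => by
    have h := hymin t
    rw [ey2] at h
    have := hmin τ₂
    linarith
  -- intermediate value: equilibrium point xs in [x s₁, x t₁]
  have hlohi : x s₁ ≤ x t₁ := hmin t₁
  have hGcont : ContinuousOn (fun z => hfun k1 m z - a*(k2+(z-m))) (Set.Icc (x s₁) (x t₁)) :=
    (hfun_contOn k1 m (fun z hz => lt_of_lt_of_le hmlo hz.1)).sub (by fun_prop)
  have hGhi : hfun k1 m (x t₁) - a*(k2+(x t₁-m)) ≤ 0 := by
    have hu1 : 0 < x t₁ - m := by linarith [hmx t₁]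
    have hh : hfun k1 m (x t₁) = a * y t₁ := by
      rw [hfun, div_eq_iff (ne_of_gt hu1)]
      linarith [e1]
    rw [hh]
    nlinarith [hyub t₁]
  have hGlo : 0 ≤ hfun k1 m (x s₁) - a*(k2+(x s₁-m)) := by
    have hu1 : 0 < x s₁ - m := by linarith [hmx s₁]
    have hh : hfun k1 m (x s₁) = a * y s₁ := by
      rw [hfun, div_eq_iff (ne_of_gt hu1)]
      linarith [e2]
    rw [hh]
    nlinarith [hylb s₁]
  obtain ⟨xs, hxsmem, hGxs⟩ := intermediate_value_Icc' hlohi hGcont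
    (Set.mem_Icc.2 ⟨hGhi, hGlo⟩)
  have hmxs : m < xs := lt_of_lt_of_le hmlo hxsmem.1
  have hxs1 : xs < 1 := lt_of_le_of_lt hxsmem.2 hxhi1
  have hys_pos : 0 < k2 + (xs - m) := by linarith
  have hhstar : hfun k1 m xs = a * (k2 + (xs - m)) := by
    have := hGxs
    dsimp only at this
    linarith
  -- sign condition
  have hsign : ∀ t, (x t - xs)*(hfun k1 m (x t) - a*(k2+(xs-m))) ≤ 0 := by
    intro t
    have hXm : m < x t := hmx t
    have hX1 : x t < 1 := lt_of_le_of_lt (hmax t) hxhi1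
    have hlevs : a*k2 ≤ hfun k1 m xs := by
      rw [hhstar]
      have h' : a*(k2+(xs-m)) = a*k2 + a*(xs-m) := by ring
      have := mul_pos ha (sub_pos.2 hmxs)
      linarith
    rcases lt_trichotomy (x t) xs with h | h | h
    · have hd := dc_lemma ha hk1 hk2 hm0 hm1 hcond2 hXm h hxs1 hlevs
      have h0 : 0 ≤ hfun k1 m (x t) - a*(k2+(xs-m)) := by
        rw [← hhstar]; linarith
      exact mul_nonpos_of_nonpos_of_nonneg (by linarith) h0
    · rw [h]; simp
    · rcases le_or_gt (hfun k1 m (x t)) (a*(k2+(xs-m))) with hle | hgt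
      · exact mul_nonpos_of_nonneg_of_nonpos (by linarith) (by linarith)
      · exfalso
        have hlevX : a*k2 ≤ hfun k1 m (x t) := by
          have h' : a*(k2+(xs-m)) = a*k2 + a*(xs-m) := by ring
          have := mul_pos ha (sub_pos.2 hmxs)
          linarith
        have hd := dc_lemma ha hk1 hk2 hm0 hm1 hcond2 hmxs h hX1 hlevX
        rw [hhstar] at hd
        linarith
  -- the Lyapunov function
  have hV : ∀ t, HasDerivAt (lyap a b k1 k2 m xs x y)
      (((x t - xs)*(hfun k1 m (x t) - a*(k2+(xs-m))) - a*(y t - (k2+(xs-m)))^2)/(k2+(x t - m))) t :=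
    fun t => lyap_deriv a b k1 k2 m xs x y t hb hk2 hk1 (hmx t) (hpos t).2 (hdx t) (hdy t)
  have hDle : ∀ t, (((x t - xs)*(hfun k1 m (x t) - a*(k2+(xs-m)))
      - a*(y t - (k2+(xs-m)))^2)/(k2+(x t - m))) ≤ 0 := by
    intro t
    apply div_nonpos_of_nonpos_of_nonneg
    · nlinarith [hsign t, sq_nonneg (y t - (k2+(xs-m)))]
    · linarith [hmx t]
  have hdiffV : Differentiable ℝ (lyap a b k1 k2 m xs x y) := fun t => (hV t).differentiableAt
  have hderivV : ∀ t, deriv (lyap a b k1 k2 m xs x y) t ≤ 0 := fun t => by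
    rw [(hV t).deriv]; exact hDle t
  have hanti : Antitone (lyap a b k1 k2 m xs x y) := antitone_of_deriv_nonpos hdiffV hderivV
  have hVper : Function.Periodic (lyap a b k1 k2 m xs x y) T := by
    intro t
    simp only [lyap]
    rw [hxper t, hyper t]
  have hVconst : ∀ t, lyap a b k1 k2 m xs x y t = lyap a b k1 k2 m xs x y 0 := by
    intro t
    obtain ⟨n, hn⟩ := exists_nat_gt (|t| / T)
    have h1 : |t| < n * T := (div_lt_iff₀ hT).1 hn
    have h2 : lyap a b k1 k2 m xs x y ((n:ℝ) * T) = lyap a b k1 k2 m xs x y 0 := by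
      have := hVper.int_mul_eq (n : ℤ)
      push_cast at this
      exact this
    have h3 : lyap a b k1 k2 m xs x y (-((n:ℝ) * T)) = lyap a b k1 k2 m xs x y 0 := by
      have := hVper.int_mul_eq (-(n:ℤ))
      push_cast at this
      simpa [neg_mul] using this
    have hup : lyap a b k1 k2 m xs x y ((n:ℝ)*T) ≤ lyap a b k1 k2 m xs x y t :=
      hanti (by linarith [le_abs_self t])
    have hdn : lyap a b k1 k2 m xs x y t ≤ lyap a b k1 k2 m xs x y (-((n:ℝ)*T)) :=
      hanti (by linarith [neg_abs_le t])
    linarith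
  have hVfun : lyap a b k1 k2 m xs x y = fun _ => lyap a b k1 k2 m xs x y 0 := funext hVconst
  have hDzero : ∀ t, (((x t - xs)*(hfun k1 m (x t) - a*(k2+(xs-m)))
      - a*(y t - (k2+(xs-m)))^2)/(k2+(x t - m))) = 0 := by
    intro t
    have h := hV t
    rw [hVfun] at h
    exact h.unique (hasDerivAt_const t _)
  have hyeq : ∀ t, y t = k2 + (xs - m) := by
    intro t
    have h := hDzero t
    have hP : (0:ℝ) < k2 + (x t - m) := by linarith [hmx t]
    have hnum : (x t - xs)*(hfun k1 m (x t) - a*(k2+(xs-m))) - a*(y t - (k2+(xs-m)))^2 = 0 :=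
      (div_eq_zero_iff.1 h).resolve_right (ne_of_gt hP)
    have hsq : (y t - (k2+(xs-m)))^2 ≤ 0 := by nlinarith [hsign t]
    have h0 : y t - (k2+(xs-m)) = 0 := by nlinarith [sq_nonneg (y t - (k2+(xs-m)))]
    linarith
  have hyfun : y = fun _ => k2 + (xs - m) := funext hyeq
  have hxeq : ∀ t, x t = (k2 + (xs - m)) - k2 + m := by
    intro t
    have h := hdy t
    simp only [hyfun] at h
    have hg : predRHS b k2 m (x t) (k2 + (xs - m)) = 0 := h.unique (hasDerivAt_const t _)
    rw [predRHS, hmaxeq t] at hg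
    have hP : (0:ℝ) < k2 + (x t - m) := by linarith [hmx t]
    have h2 : 1 - (k2 + (xs - m))/(k2+(x t - m)) = 0 := by
      rcases mul_eq_zero.1 hg with h' | h'
      · rcases mul_eq_zero.1 h' with h'' | h''
        · exact absurd h'' (ne_of_gt hb)
        · exact absurd h'' (ne_of_gt (by linarith [hmxs] : (0:ℝ) < k2 + (xs - m)))
      · exact h'
    field_simp [ne_of_gt hP] at h2
    linarith
  exact hnc ⟨(k2 + (xs - m)) - k2 + m, k2 + (xs - m), fun t => ⟨hxeq t, hyeq t⟩⟩
end
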